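/- arXiv:2210.11225 — 7 statements merged into one kernel-verified Lean document; each statement's English description precedes it below -/
import Mathlib

section
/- Let V satisfy the condition (V-scaling) on (0,∞), extend V to all of ℝ by setting V(u) = 0 for u ≤ 0, and assume V is subadditive on [0,∞), i.e. V(x + y) ≤ V(x) + V(y) for all x, y ≥ 0. Then for every λ > 0 there exists a constant C > 0, depending only on λ, β₁, β₂ and C_V, such that for every r > 0 and every s with 0 < s ≤ λ r, ∫_{{|t| > r}} V(s + t) / (|t| V(|t|)²) dt ≤ C / V(r). -/
open MeasureTheory Real Set
open scoped ENNReal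

/-!
For `t > r` subadditivity and monotonicity give `V (s + t) ≤ V s + V t ≲ V t`, because
`V s ≲ V r` by the upper scaling bound (as `s ≤ λ r`), so the integrand is `≲ 1 / (t V t)`;
the lower scaling bound `V t ≳ (t / r) ^ β₁ V r` turns this into `t ^ (-1 - β₁) r ^ β₁ / V r`,
whose integral over `(r, ∞)` is `1 / (β₁ V r)`. For `t < -r` the integrand vanishes unless
`-s < t`, and on `(-s, -r)` it is at most `V s / (r V r ^ 2) ≲ 1 / (r V r)`, on an interval
of length at most `s ≤ λ r`.
-/

theorem lintegral_Ioi_rpow_neg_one_sub {r β : ℝ} (hr : 0 < r) (hβ : 0 < β) :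
    ∫⁻ t in Ioi r, ENNReal.ofReal (t ^ (-(1 + β))) = ENNReal.ofReal (r ^ (-β) / β) := by
  have hexp : -(1 + β) < -1 := by linarith
  rw [← ofReal_integral_eq_lintegral_ofReal (integrableOn_Ioi_rpow_of_lt hexp hr)
    ((ae_restrict_iff' measurableSet_Ioi).2 (ae_of_all _ fun t ht =>
      (rpow_pos_of_pos (hr.trans ht) _).le)), integral_Ioi_rpow_of_lt hexp hr]
  congr 1
  rw [show -(1 + β) + 1 = -β by ring, neg_div_neg_eq]

theorem setOf_lt_abs_subset (r : ℝ) : {t : ℝ | r < |t|} ⊆ Iio (-r) ∪ Ioi r := fun t ht => by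
  rcases lt_abs.1 (show r < |t| from ht) with h | h
  · exact Or.inr h
  · exact Or.inl (show t < -r by linarith)

section Scaling

variable {V : ℝ → ℝ} {β₁ β₂ CV : ℝ}

theorem le_mul_rpow_of_scaling_upper (hVpos : ∀ r : ℝ, 0 < r → 0 < V r)
    (hVmono : ∀ r R : ℝ, 0 < r → r ≤ R → V r ≤ V R)
    (hup : ∀ r R : ℝ, 0 < r → r ≤ R → V R / V r ≤ CV * (R / r) ^ β₂)
    {r s L : ℝ} (hr : 0 < r) (hs : 0 < s) (hL : 1 ≤ L) (hsL : s ≤ L * r) :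
    V s ≤ CV * L ^ β₂ * V r := by
  have hrL : r ≤ L * r := le_mul_of_one_le_left hr.le hL
  have h := hup r (L * r) hr hrL
  rw [mul_div_cancel_right₀ L hr.ne', div_le_iff₀ (hVpos r hr)] at h
  exact (hVmono s (L * r) hs hsL).trans h

theorem rpow_mul_le_of_scaling_lower (hVpos : ∀ r : ℝ, 0 < r → 0 < V r) (hCV : 0 < CV)
    (hlow : ∀ r R : ℝ, 0 < r → r ≤ R → CV⁻¹ * (R / r) ^ β₁ ≤ V R / V r)
    {r t : ℝ} (hr : 0 < r) (hrt : r ≤ t) :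
    t ^ β₁ * V r ≤ CV * r ^ β₁ * V t := by
  have h := hlow r t hr hrt
  rw [le_div_iff₀ (hVpos r hr), mul_assoc, inv_mul_le_iff₀ hCV,
    div_rpow (hr.trans_le hrt).le hr.le, div_mul_eq_mul_div,
    div_le_iff₀ (rpow_pos_of_pos hr _)] at h
  linarith

theorem div_mul_sq_le_of_le (hVpos : ∀ r : ℝ, 0 < r → 0 < V r)
    (hVmono : ∀ r R : ℝ, 0 < r → r ≤ R → V r ≤ V R)
    {r u x A : ℝ} (hr : 0 < r) (hru : r ≤ u) (hx : 0 ≤ x) (hxA : x ≤ A * V r) :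
    x / (u * V u ^ 2) ≤ A / (r * V r) := by
  have hVr := hVpos r hr
  have hden : r * V r ^ 2 ≤ u * V u ^ 2 :=
    mul_le_mul hru (pow_le_pow_left₀ hVr.le (hVmono r u hr hru) 2) (by positivity) (by linarith)
  calc x / (u * V u ^ 2) ≤ A * V r / (r * V r ^ 2) :=
        div_le_div₀ (hx.trans hxA) hxA (by positivity) hden
    _ = A / (r * V r) := by field_simp

theorem div_mul_sq_le_rpow_of_le (hVpos : ∀ r : ℝ, 0 < r → 0 < V r) (hCV : 0 < CV)
    (hlow : ∀ r R : ℝ, 0 < r → r ≤ R → CV⁻¹ * (R / r) ^ β₁ ≤ V R / V r)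
    {r t x B : ℝ} (hr : 0 < r) (hrt : r ≤ t) (hB : 0 ≤ B) (hxB : x ≤ B * V t) :
    x / (t * V t ^ 2) ≤ B * CV * r ^ β₁ / V r * t ^ (-(1 + β₁)) := by
  have ht : 0 < t := hr.trans_le hrt
  have hVt := hVpos t ht
  have hVr := hVpos r hr
  have htβ := rpow_pos_of_pos ht β₁
  have hlow' := rpow_mul_le_of_scaling_lower hVpos hCV hlow hr hrt
  rw [rpow_neg ht.le, rpow_add ht, rpow_one]
  calc x / (t * V t ^ 2) ≤ B * V t / (t * V t ^ 2) := by gcongr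
    _ = B / (t * V t) := by field_simp
    _ ≤ B * CV * r ^ β₁ / V r * (t * t ^ β₁)⁻¹ := by
      rw [← div_eq_mul_inv, div_div, div_le_div_iff₀ (by positivity) (by positivity)]
      calc B * (V r * (t * t ^ β₁)) = B * t * (t ^ β₁ * V r) := by ring
        _ ≤ B * t * (CV * r ^ β₁ * V t) := by gcongr
        _ = B * CV * r ^ β₁ * (t * V t) := by ring

theorem lintegral_Ioi_div_mul_sq_le (hβ₁ : 0 < β₁) (hCV : 0 < CV)
    (hVpos : ∀ r : ℝ, 0 < r → 0 < V r)
    (hVmono : ∀ r R : ℝ, 0 < r → r ≤ R → V r ≤ V R)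
    (hlow : ∀ r R : ℝ, 0 < r → r ≤ R → CV⁻¹ * (R / r) ^ β₁ ≤ V R / V r)
    (hVsub : ∀ x y : ℝ, 0 ≤ x → 0 ≤ y → V (x + y) ≤ V x + V y)
    {r s A : ℝ} (hr : 0 < r) (hs : 0 ≤ s) (hA : 0 ≤ A) (hsA : V s ≤ A * V r) :
    ∫⁻ t in Ioi r, ENNReal.ofReal (V (s + t) / (|t| * V |t| ^ 2)) ≤
      ENNReal.ofReal ((A + 1) * CV / β₁ / V r) := by
  have hVr := hVpos r hr
  set D := (A + 1) * CV * r ^ β₁ / V r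
  have hD : 0 ≤ D := by positivity
  calc ∫⁻ t in Ioi r, ENNReal.ofReal (V (s + t) / (|t| * V |t| ^ 2))
      ≤ ∫⁻ t in Ioi r, ENNReal.ofReal D * ENNReal.ofReal (t ^ (-(1 + β₁))) := by
        refine setLIntegral_mono' measurableSet_Ioi fun t (ht : r < t) => ?_
        have ht0 : 0 < t := hr.trans ht
        have hshift : V (s + t) ≤ (A + 1) * V t := by
          have := hVsub s t hs ht0.le
          have := hVmono r t hr ht.le
          nlinarith
        rw [← ENNReal.ofReal_mul hD, abs_of_pos ht0]
        exact ENNReal.ofReal_le_ofReal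
          (div_mul_sq_le_rpow_of_le hVpos hCV hlow hr ht.le (by positivity) hshift)
    _ = ENNReal.ofReal ((A + 1) * CV / β₁ / V r) := by
        rw [lintegral_const_mul _ (by fun_prop), lintegral_Ioi_rpow_neg_one_sub hr hβ₁,
          ← ENNReal.ofReal_mul hD, rpow_neg hr.le]
        congr 1
        have := (rpow_pos_of_pos hr β₁).ne'
        simp only [D]
        field_simp

theorem lintegral_Iio_neg_div_mul_sq_le (hVpos : ∀ r : ℝ, 0 < r → 0 < V r)
    (hVmono : ∀ r R : ℝ, 0 < r → r ≤ R → V r ≤ V R) (hVzero : ∀ u : ℝ, u ≤ 0 → V u = 0)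
    {r s A lam : ℝ} (hr : 0 < r) (hA : 0 ≤ A) (hsA : V s ≤ A * V r) (hsl : s ≤ lam * r) :
    ∫⁻ t in Iio (-r), ENNReal.ofReal (V (s + t) / (|t| * V |t| ^ 2)) ≤
      ENNReal.ofReal (A * lam / V r) := by
  have hVr := hVpos r hr
  calc ∫⁻ t in Iio (-r), ENNReal.ofReal (V (s + t) / (|t| * V |t| ^ 2))
      ≤ ∫⁻ t in Iio (-r),
          (Ioo (-s) (-r)).indicator (fun _ => ENNReal.ofReal (A / (r * V r))) t := by
        refine setLIntegral_mono' measurableSet_Iio fun t (ht : t < -r) => ?_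
        by_cases hts : t ∈ Ioo (-s) (-r)
        · have hst : 0 < s + t := by linarith [hts.1]
          rw [indicator_of_mem hts, abs_of_neg (by linarith)]
          exact ENNReal.ofReal_le_ofReal (div_mul_sq_le_of_le hVpos hVmono hr (by linarith)
            (hVpos _ hst).le ((hVmono _ s hst (by linarith)).trans hsA))
        · have hst : s + t ≤ 0 := by
            by_contra! h
            exact hts ⟨by linarith, ht⟩
          simp [hVzero _ hst]
    _ ≤ ∫⁻ t, (Ioo (-s) (-r)).indicator (fun _ => ENNReal.ofReal (A / (r * V r))) t :=
        setLIntegral_le_lintegral _ _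
    _ = ENNReal.ofReal (A / (r * V r)) * ENNReal.ofReal (-r - -s) := by
        rw [lintegral_indicator_const measurableSet_Ioo, volume_Ioo]
    _ ≤ ENNReal.ofReal (A / (r * V r)) * ENNReal.ofReal (lam * r) := by
        gcongr
        linarith
    _ = ENNReal.ofReal (A * lam / V r) := by
        rw [← ENNReal.ofReal_mul (by positivity)]
        congr 1
        field_simp

end Scaling

theorem stmt_5_general (β₁ β₂ CV : ℝ) (V : ℝ → ℝ)
    (hβ₁ : 0 < β₁) (hCV : 1 ≤ CV)
    (hVpos : ∀ r : ℝ, 0 < r → 0 < V r)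
    (hVmono : ∀ r R : ℝ, 0 < r → r ≤ R → V r ≤ V R)
    (hVS : ∀ r R : ℝ, 0 < r → r ≤ R →
      CV⁻¹ * (R / r) ^ β₁ ≤ V R / V r ∧ V R / V r ≤ CV * (R / r) ^ β₂)
    (hVzero : ∀ u : ℝ, u ≤ 0 → V u = 0)
    (hVsub : ∀ x y : ℝ, 0 ≤ x → 0 ≤ y → V (x + y) ≤ V x + V y) :
    ∀ lam : ℝ, 0 < lam → ∃ C : ℝ, 0 < C ∧ ∀ r s : ℝ, 0 < r → 0 < s → s ≤ lam * r →
      ∫⁻ t in {t : ℝ | r < |t|}, ENNReal.ofReal (V (s + t) / (|t| * (V |t|) ^ 2)) ≤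
        ENNReal.ofReal (C / V r) := by
  intro lam hlam
  have hCV0 : 0 < CV := one_pos.trans_le hCV
  set A := CV * max lam 1 ^ β₂
  have hA : 0 < A := by positivity
  refine ⟨A * lam + (A + 1) * CV / β₁, by positivity, fun r s hr hs hsl => ?_⟩
  have hVr := hVpos r hr
  have hsA : V s ≤ A * V r :=
    le_mul_rpow_of_scaling_upper hVpos hVmono (fun r R h h' => (hVS r R h h').2) hr hs
      (le_max_right _ _) (hsl.trans (by gcongr; exact le_max_left _ _))
  calc ∫⁻ t in {t : ℝ | r < |t|}, ENNReal.ofReal (V (s + t) / (|t| * (V |t|) ^ 2))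
      ≤ ∫⁻ t in Iio (-r) ∪ Ioi r, ENNReal.ofReal (V (s + t) / (|t| * (V |t|) ^ 2)) :=
        lintegral_mono_set (setOf_lt_abs_subset r)
    _ ≤ ENNReal.ofReal (A * lam / V r) + ENNReal.ofReal ((A + 1) * CV / β₁ / V r) :=
        (lintegral_union_le _ _ _).trans (add_le_add
          (lintegral_Iio_neg_div_mul_sq_le hVpos hVmono hVzero hr hA.le hsA hsl)
          (lintegral_Ioi_div_mul_sq_le hβ₁ hCV0 hVpos hVmono (fun r R h h' => (hVS r R h h').1)
            hVsub hr hs.le hA.le hsA))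
    _ = ENNReal.ofReal ((A * lam + (A + 1) * CV / β₁) / V r) := by
        rw [← ENNReal.ofReal_add (by positivity) (by positivity), add_div]

/-- Let `V` satisfy (V-scaling) on `(0,∞)`, vanish on `(-∞,0]`, and be
subadditive on `[0,∞)`. Then for every `λ > 0` there is `C > 0` (depending only on
`λ, β₁, β₂, C_V`) such that for every `r > 0` and `0 < s ≤ λ r`,
`∫_{|t|>r} V(s+t)/(|t| V(|t|)²) dt ≤ C / V(r)`. -/
theorem stmt_5 (β₁ β₂ CV : ℝ) (V : ℝ → ℝ)
    (hβ₁ : 0 < β₁) (hββ : β₁ ≤ β₂) (hβ₂ : β₂ < 1) (hCV : 1 ≤ CV)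
    (hVpos : ∀ r : ℝ, 0 < r → 0 < V r)
    (hVmono : ∀ r R : ℝ, 0 < r → r ≤ R → V r ≤ V R)
    (hVS : ∀ r R : ℝ, 0 < r → r ≤ R →
      CV⁻¹ * (R / r) ^ β₁ ≤ V R / V r ∧ V R / V r ≤ CV * (R / r) ^ β₂)
    (hVzero : ∀ u : ℝ, u ≤ 0 → V u = 0)
    (hVsub : ∀ x y : ℝ, 0 ≤ x → 0 ≤ y → V (x + y) ≤ V x + V y) :
    ∀ lam : ℝ, 0 < lam → ∃ C : ℝ, 0 < C ∧ ∀ r s : ℝ, 0 < r → 0 < s → s ≤ lam * r →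
      ∫⁻ t in {t : ℝ | r < |t|}, ENNReal.ofReal (V (s + t) / (|t| * (V |t|) ^ 2)) ≤
        ENNReal.ofReal (C / V r) :=
  stmt_5_general β₁ β₂ CV V hβ₁ hCV hVpos hVmono hVS hVzero hVsub
end

section
/- Let d ∈ ℕ, i ∈ {1,…,d}, let 0 < α̲ ≤ ᾱ < 2 and let φ satisfy the weak scaling condition (WS). Let η ∈ (ᾱ/2, 1], κ₀ ≥ 1, κ₁ > 0, and let κ : ℝ^d × ℝ^d → ℝ be a measurable function with κ₀^{-1} ≤ κ(x,y) ≤ κ₀ for all x, y ∈ ℝ^d and |κ(x, x+h) − κ(x,x)| ≤ κ₁ |h|^η for all x ∈ ℝ^d and all h ∈ ℝ^d with |h| ≤ 1. Let g : ℝ^d → ℝ be twice continuously differentiable with compact support, and for ε > 0 and x ∈ ℝ^d define L^{(i)}_ε g(x) := ∫_{{|t| > ε}} (g(x + t e_i) − g(x)) · κ(x, x + t e_i) / (|t| φ(|t|)) dt, where e_i is the i-th standard basis vector. Then there exists a bounded function L^{(i)} g : ℝ^d → ℝ such that L^{(i)}_ε g converges uniformly on ℝ^d to L^{(i)} g as ε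 ↓ 0. -/
/-!
Pairing `t` with `-t`, the truncated integral is `∫_{t > ε} (J t + J (-t)) dt`, where `J` is the
integrand. Near `0` the second-order Taylor expansion of `g` and the Hölder bound on `κ` make the
numerator of `J t + J (-t)` of order `t ^ (1 + η)`, while the upper scaling of `φ` gives
`(t φ t)⁻¹ ≲ t ^ (-1 - ᾱ)`; so the symmetrized integrand is `O(t ^ (η - ᾱ))` uniformly in `x`,
which is integrable at `0` because `η - ᾱ > -1`. The truncations therefore converge uniformly,
with error at most the integral of this bound over `(0, ε]`. The lower scaling of `φ` makes the
kernel `(|t| φ |t|)⁻¹` integrable away from `0`, so each truncation is bounded, and hence so is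
the uniform limit.
-/

open MeasureTheory Real Filter Topology Set

lemma setOf_lt_abs_eq (ε : ℝ) : {t : ℝ | ε < |t|} = Iio (-ε) ∪ Ioi ε := by
  ext t
  simp only [mem_ofPred_eq, lt_abs, mem_union, mem_Iio, mem_Ioi, lt_neg]
  tauto

lemma integrableOn_comp_neg_Ioi_iff {F : ℝ → ℝ} {ε : ℝ} :
    IntegrableOn (fun t => F (-t)) (Ioi ε) ↔ IntegrableOn F (Iio (-ε)) := by
  rw [← (Measure.measurePreserving_neg volume).integrableOn_comp_preimage
    (Homeomorph.neg ℝ).measurableEmbedding]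
  simp [Function.comp_def]

lemma integrableOn_Ioi_add_comp_neg {F : ℝ → ℝ} {ε : ℝ} (hF : IntegrableOn F {t | ε < |t|}) :
    IntegrableOn (fun t => F t + F (-t)) (Ioi ε) := by
  rw [setOf_lt_abs_eq] at hF
  exact (hF.mono_set subset_union_right).add
    (integrableOn_comp_neg_Ioi_iff.2 (hF.mono_set subset_union_left))

lemma setIntegral_lt_abs_eq {F : ℝ → ℝ} {ε : ℝ} (hε : 0 ≤ ε)
    (hF : IntegrableOn F {t | ε < |t|}) :
    ∫ t in {t : ℝ | ε < |t|}, F t = ∫ t in Ioi ε, (F t + F (-t)) := by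
  rw [setOf_lt_abs_eq] at hF ⊢
  rw [setIntegral_union ((Iio_disjoint_Ici (by linarith)).mono_right Ioi_subset_Ici_self)
      measurableSet_Ioi (hF.mono_set subset_union_left) (hF.mono_set subset_union_right),
    integral_add (hF.mono_set subset_union_right)
      (integrableOn_comp_neg_Ioi_iff.2 (hF.mono_set subset_union_left)),
    integral_comp_neg_Ioi, integral_Iic_eq_integral_Iio, add_comm]

lemma tendsto_setIntegral_Ioc_zero {w : ℝ → ℝ} (hw : IntegrableOn w (Ioc 0 1)) :
    Tendsto (fun ε => ∫ t in Ioc 0 ε, w t) (𝓝[>] 0) (𝓝 0) := by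
  have hcont := intervalIntegral.continuousOn_primitive (μ := volume)
    ((integrableOn_Icc_iff_integrableOn_Ioc (f := w) (a := 0) (b := 1)).2 hw) 0
    (left_mem_Icc.2 zero_le_one)
  have h := hcont.tendsto
  rw [Ioc_self, Measure.restrict_empty, integral_zero_measure] at h
  rw [← nhdsWithin_Ioo_eq_nhdsGT zero_lt_one]
  exact h.mono_left (nhdsWithin_mono _ Ioo_subset_Icc_self)

theorem tendstoUniformly_setIntegral_lt_abs {X : Type*} (F : X → ℝ → ℝ) (w : ℝ → ℝ)
    (hF : ∀ x ε, 0 < ε → IntegrableOn (F x) {t | ε < |t|})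
    (hFm : ∀ x, AEStronglyMeasurable (F x))
    (hw : IntegrableOn w (Ioc 0 1))
    (hsym : ∀ x, ∀ t ∈ Ioc (0 : ℝ) 1, |F x t + F x (-t)| ≤ w t) :
    TendstoUniformly (fun ε x => ∫ t in {t : ℝ | ε < |t|}, F x t)
      (fun x => ∫ t in Ioi 0, (F x t + F x (-t))) (𝓝[>] 0) := by
  have hsymInt : ∀ x, IntegrableOn (fun t => F x t + F x (-t)) (Ioc 0 1) := fun x =>
    hw.mono' ((hFm x).add ((hFm x).comp_quasiMeasurePreserving
      (Measure.measurePreserving_neg volume).quasiMeasurePreserving)).restrict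
      ((ae_restrict_iff' measurableSet_Ioc).2 (ae_of_all _ (hsym x)))
  have hsymIoi : ∀ x, IntegrableOn (fun t => F x t + F x (-t)) (Ioi 0) := fun x => by
    rw [← Ioc_union_Ioi_eq_Ioi zero_le_one]
    exact (hsymInt x).union (integrableOn_Ioi_add_comp_neg (hF x 1 one_pos))
  rw [Metric.tendstoUniformly_iff]
  intro δ hδ
  filter_upwards [tendsto_setIntegral_Ioc_zero hw (Iio_mem_nhds hδ),
    Ioo_mem_nhdsGT zero_lt_one] with ε hwε hε x
  rw [setIntegral_lt_abs_eq hε.1.le (hF x ε hε.1), Real.dist_eq,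
    intervalIntegral.integral_Ioi_sub_Ioi (hsymIoi x) hε.1.le,
    intervalIntegral.integral_of_le hε.1.le]
  calc ‖∫ t in Ioc 0 ε, (F x t + F x (-t))‖ ≤ ∫ t in Ioc 0 ε, w t :=
        norm_integral_le_of_norm_le (hw.mono_set (Ioc_subset_Ioc_right hε.2.le))
          ((ae_restrict_iff' measurableSet_Ioc).2 (ae_of_all _ fun t ht =>
            hsym x t ⟨ht.1, ht.2.trans hε.2.le⟩))
    _ < δ := hwε

lemma TendstoUniformly.exists_forall_abs_le {ι X : Type*} {l : Filter ι} [l.NeBot]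
    {F : ι → X → ℝ} {f : X → ℝ} (h : TendstoUniformly F f l)
    (hF : ∀ᶠ i in l, ∃ M, ∀ x, |F i x| ≤ M) : ∃ M, ∀ x, |f x| ≤ M := by
  obtain ⟨i, ⟨M, hM⟩, hi⟩ := (hF.and (Metric.tendstoUniformly_iff.1 h 1 one_pos)).exists
  refine ⟨M + 1, fun x => ?_⟩
  have := hi x
  rw [Real.dist_eq] at this
  linarith [abs_sub_abs_le_abs_sub (f x) (F i x), hM x, abs_sub_comm (f x) (F i x)]

lemma measurable_abs_mul_comp_abs {φ : ℝ → ℝ} (hφpos : ∀ r, 0 < r → 0 < φ r)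
    (hφmono : MonotoneOn φ (Ioi 0)) : Measurable fun t : ℝ => |t| * φ |t| := by
  -- `|t| * φ |t|` does not see `φ` off `(0, ∞)`, and extending `φ` by `0` there is monotone
  let ψ : ℝ → ℝ := fun r => if 0 < r then φ r else 0
  have hψ : Monotone ψ := by
    intro r s hrs
    by_cases hr : 0 < r
    · simp [ψ, hr, hr.trans_le hrs, hφmono hr (hr.trans_le hrs) hrs]
    · by_cases hs : 0 < s
      · simp [ψ, hr, hs, (hφpos s hs).le]
      · simp [ψ, hr, hs]
  have hφψ : (fun t : ℝ => |t| * φ |t|) = fun t => |t| * ψ |t| := by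
    funext t
    rcases eq_or_ne t 0 with rfl | ht
    · simp
    · simp [ψ, abs_pos.2 ht]
  rw [hφψ]
  exact measurable_abs.mul (hψ.measurable.comp measurable_abs)

lemma inv_mul_le_of_lowerScaling {φ : ℝ → ℝ} {α c r R : ℝ} (hc : 0 < c) (hr : 0 < r)
    (hR : 0 < R) (hφr : 0 < φ r) (hlow : c * (R / r) ^ α ≤ φ R / φ r) :
    (R * φ R)⁻¹ ≤ (c * r ^ (-α) * φ r)⁻¹ * R ^ (-1 - α) := by
  rw [div_rpow hR.le hr.le, le_div_iff₀ hφr, mul_div_assoc', div_mul_eq_mul_div,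
    div_le_iff₀ (by positivity)] at hlow
  have hRα := rpow_pos_of_pos hR α
  have hφR : 0 < φ R := by nlinarith [mul_pos (mul_pos hc hRα) hφr, rpow_pos_of_pos hr α]
  rw [rpow_sub hR, rpow_neg_one, rpow_neg hr.le]
  field_simp
  linarith

lemma inv_mul_le_of_upperScaling {φ : ℝ → ℝ} {α C r R : ℝ} (hr : 0 < r) (hR : 0 < R)
    (hφr : 0 < φ r) (hφR : 0 < φ R) (hup : φ R / φ r ≤ C * (R / r) ^ α) :
    (r * φ r)⁻¹ ≤ C * R ^ α / φ R * r ^ (-1 - α) := by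
  rw [div_rpow hR.le hr.le, div_le_iff₀ hφr] at hup
  have hrα := rpow_pos_of_pos hr α
  rw [rpow_sub hr, rpow_neg_one]
  field_simp at hup ⊢
  linarith

lemma integrableOn_lt_abs_comp_abs {f : ℝ → ℝ} {ε : ℝ} (hε : 0 ≤ ε)
    (hf : IntegrableOn f (Ioi ε)) : IntegrableOn (fun t => f |t|) {t | ε < |t|} := by
  have hf' : IntegrableOn (fun t => f |t|) (Ioi ε) :=
    hf.congr_fun (fun t ht => by rw [abs_of_pos (hε.trans_lt ht)]) measurableSet_Ioi
  rw [setOf_lt_abs_eq]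
  refine IntegrableOn.union ?_ hf'
  exact integrableOn_comp_neg_Ioi_iff.1 (by simpa only [abs_neg] using hf')

lemma integrableOn_lt_abs_inv_abs_mul {φ : ℝ → ℝ} {α c ε : ℝ} (hα : 0 < α) (hc : 0 < c)
    (hε : 0 < ε) (hφpos : ∀ r, 0 < r → 0 < φ r) (hφmono : MonotoneOn φ (Ioi 0))
    (hlow : ∀ R, ε ≤ R → c * (R / ε) ^ α ≤ φ R / φ ε) :
    IntegrableOn (fun t : ℝ => (|t| * φ |t|)⁻¹) {t | ε < |t|} := by
  have hdom : IntegrableOn (fun t : ℝ => (c * ε ^ (-α) * φ ε)⁻¹ * |t| ^ (-1 - α))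
      {t | ε < |t|} :=
    integrableOn_lt_abs_comp_abs hε.le
      ((integrableOn_Ioi_rpow_of_lt (by linarith) hε).const_mul _)
  refine hdom.mono' (measurable_abs_mul_comp_abs hφpos hφmono).inv.aestronglyMeasurable
    ((ae_restrict_iff' (measurableSet_lt measurable_const measurable_abs)).2
      (ae_of_all _ fun t (ht : ε < |t|) => ?_))
  have hφt := hφpos _ (hε.trans ht)
  rw [norm_inv, Real.norm_eq_abs, abs_of_pos (mul_pos (hε.trans ht) hφt)]
  exact inv_mul_le_of_lowerScaling hc hε (hε.trans ht) (hφpos ε hε) (hlow _ ht.le)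

section SecondDifference

variable {E : Type*} [NormedAddCommGroup E] [NormedSpace ℝ E] {g : E → ℝ} {K : NNReal}

lemma abs_sub_sub_fderiv_le (hg : Differentiable ℝ g) (hK : LipschitzWith K (fderiv ℝ g))
    (x h : E) : |g (x + h) - g x - fderiv ℝ g x h| ≤ K * ‖h‖ ^ 2 := by
  have hmv := (convex_closedBall x ‖h‖).norm_image_sub_le_of_norm_fderiv_le'
    (φ := fderiv ℝ g x) (C := K * ‖h‖) (fun y _ => hg y) (fun y hy => ?_)
    (Metric.mem_closedBall_self (norm_nonneg h)) (by simp : x + h ∈ Metric.closedBall x ‖h‖)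
  · simpa [sq, mul_assoc] using hmv
  · rw [← dist_eq_norm]
    exact (hK.dist_le_mul y x).trans (by gcongr; exact Metric.mem_closedBall.1 hy)

lemma abs_add_add_sub_two_mul_le (hg : Differentiable ℝ g) (hK : LipschitzWith K (fderiv ℝ g))
    (x h : E) : |g (x + h) + g (x - h) - 2 * g x| ≤ 2 * K * ‖h‖ ^ 2 := by
  have hplus := abs_sub_sub_fderiv_le hg hK x h
  have hminus := abs_sub_sub_fderiv_le hg hK x (-h)
  rw [norm_neg, map_neg, ← sub_eq_add_neg, sub_neg_eq_add] at hminus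
  calc |g (x + h) + g (x - h) - 2 * g x|
      = |(g (x + h) - g x - fderiv ℝ g x h) + (g (x - h) - g x + fderiv ℝ g x h)| := by
        ring_nf
    _ ≤ _ + _ := abs_add_le _ _
    _ ≤ 2 * K * ‖h‖ ^ 2 := by linarith

end SecondDifference

section JumpIntegrand

variable {E : Type*} [NormedAddCommGroup E] [NormedSpace ℝ E]

noncomputable def jumpIntegrand (g : E → ℝ) (κ : E → E → ℝ) (φ : ℝ → ℝ) (e x : E) (t : ℝ) : ℝ :=
  (g (x + t • e) - g x) * κ x (x + t • e) / (|t| * φ |t|)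

variable {g : E → ℝ} {κ : E → E → ℝ} {φ : ℝ → ℝ} {e : E}

lemma measurable_jumpIntegrand [MeasurableSpace E] [BorelSpace E] (hg : Continuous g)
    (hκ : Measurable (Function.uncurry κ)) (hφpos : ∀ r, 0 < r → 0 < φ r)
    (hφmono : MonotoneOn φ (Ioi 0)) (x : E) : Measurable (jumpIntegrand g κ φ e x) := by
  have hline : Continuous fun t : ℝ => x + t • e :=
    continuous_const.add (continuous_id.smul continuous_const)
  exact (((hg.comp hline).sub continuous_const).measurable.mul
    (hκ.comp (measurable_const.prodMk hline.measurable))).div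
    (measurable_abs_mul_comp_abs hφpos hφmono)

lemma abs_jumpIntegrand_le {M κ₀ : ℝ} (hg : ∀ y, |g y| ≤ M) (hκ : ∀ x y, |κ x y| ≤ κ₀)
    (hφpos : ∀ r, 0 < r → 0 < φ r) (x : E) (t : ℝ) :
    |jumpIntegrand g κ φ e x t| ≤ 2 * M * κ₀ * (|t| * φ |t|)⁻¹ := by
  rcases eq_or_ne t 0 with rfl | ht
  · simp [jumpIntegrand]
  have hden : 0 < |t| * φ |t| := mul_pos (abs_pos.2 ht) (hφpos _ (abs_pos.2 ht))
  rw [jumpIntegrand, abs_div, abs_mul, abs_of_pos hden, div_eq_mul_inv]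
  have hdiff : |g (x + t • e) - g x| ≤ 2 * M := by
    linarith [abs_sub (g (x + t • e)) (g x), hg (x + t • e), hg x]
  exact mul_le_mul_of_nonneg_right
    (mul_le_mul hdiff (hκ _ _) (abs_nonneg _) (by linarith [abs_nonneg (g x), hg x]))
    (inv_nonneg.2 hden.le)

lemma jumpIntegrand_add_neg {t : ℝ} (ht : 0 < t) (x : E) :
    jumpIntegrand g κ φ e x t + jumpIntegrand g κ φ e x (-t) =
      ((g (x + t • e) - g x) * κ x (x + t • e) + (g (x - t • e) - g x) * κ x (x - t • e)) /
        (t * φ t) := by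
  simp only [jumpIntegrand, abs_neg, abs_of_pos ht, neg_smul, ← sub_eq_add_neg, add_div]

lemma abs_jump_add_jump_neg_le {K₁ K₂ : NNReal} {κ₀ κ₁ η : ℝ} (hg : Differentiable ℝ g)
    (hK₁ : LipschitzWith K₁ g) (hK₂ : LipschitzWith K₂ (fderiv ℝ g)) (hκ : ∀ x y, |κ x y| ≤ κ₀)
    (hκreg : ∀ x h : E, ‖h‖ ≤ 1 → |κ x (x + h) - κ x x| ≤ κ₁ * ‖h‖ ^ η)
    {x h : E} (hh : ‖h‖ ≤ 1) :
    |(g (x + h) - g x) * κ x (x + h) + (g (x - h) - g x) * κ x (x - h)| ≤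
      2 * K₂ * κ₀ * ‖h‖ ^ 2 + 2 * K₁ * κ₁ * (‖h‖ * ‖h‖ ^ η) := by
  have hsecond := abs_add_add_sub_two_mul_le hg hK₂ x h
  have hfirst : |g (x - h) - g x| ≤ K₁ * ‖h‖ := by
    simpa [dist_eq_norm] using hK₁.dist_le_mul (x - h) x
  have hκdiff : |κ x (x - h) - κ x (x + h)| ≤ 2 * κ₁ * ‖h‖ ^ η := by
    have hminus := hκreg x (-h) (by rwa [norm_neg])
    rw [norm_neg, ← sub_eq_add_neg] at hminus
    have htri := abs_sub (κ x (x - h) - κ x x) (κ x (x + h) - κ x x)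
    rw [sub_sub_sub_cancel_right] at htri
    linarith [hκreg x h hh]
  calc |(g (x + h) - g x) * κ x (x + h) + (g (x - h) - g x) * κ x (x - h)|
      = |(g (x + h) + g (x - h) - 2 * g x) * κ x (x + h) +
          (g (x - h) - g x) * (κ x (x - h) - κ x (x + h))| := by ring_nf
    _ ≤ |g (x + h) + g (x - h) - 2 * g x| * |κ x (x + h)| +
          |g (x - h) - g x| * |κ x (x - h) - κ x (x + h)| := by
        rw [← abs_mul, ← abs_mul]; exact abs_add_le _ _
    _ ≤ 2 * K₂ * ‖h‖ ^ 2 * κ₀ + K₁ * ‖h‖ * (2 * κ₁ * ‖h‖ ^ η) := by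
        gcongr
        exact hκ _ _
    _ = 2 * K₂ * κ₀ * ‖h‖ ^ 2 + 2 * K₁ * κ₁ * (‖h‖ * ‖h‖ ^ η) := by ring

lemma abs_jumpIntegrand_add_neg_le {K₁ K₂ : NNReal} {κ₀ κ₁ η α B t : ℝ} (he : ‖e‖ = 1)
    (hg : Differentiable ℝ g) (hK₁ : LipschitzWith K₁ g) (hK₂ : LipschitzWith K₂ (fderiv ℝ g))
    (hκ : ∀ x y, |κ x y| ≤ κ₀)
    (hκreg : ∀ x h : E, ‖h‖ ≤ 1 → |κ x (x + h) - κ x x| ≤ κ₁ * ‖h‖ ^ η) (hη : η ≤ 1)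
    (ht : t ∈ Ioc (0 : ℝ) 1) (hφt : 0 < φ t) (hden : (t * φ t)⁻¹ ≤ B * t ^ (-1 - α)) (x : E) :
    |jumpIntegrand g κ φ e x t + jumpIntegrand g κ φ e x (-t)| ≤
      (2 * K₂ * κ₀ + 2 * K₁ * κ₁) * B * t ^ (η - α) := by
  obtain ⟨ht0, ht1⟩ := ht
  have hte : ‖t • e‖ = t := by rw [norm_smul, he, mul_one, norm_of_nonneg ht0.le]
  have hnum := abs_jump_add_jump_neg_le hg hK₁ hK₂ hκ hκreg (x := x) (hte.trans_le ht1)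
  rw [hte] at hnum
  have hκ₀ : 0 ≤ κ₀ := (abs_nonneg _).trans (hκ x x)
  have hB : 0 ≤ B * t ^ (-1 - α) := (inv_nonneg.2 (mul_pos ht0 hφt).le).trans hden
  have hsq : t ^ 2 ≤ t * t ^ η := by
    rw [sq]
    gcongr
    simpa using rpow_le_rpow_of_exponent_ge ht0 ht1 hη
  have hpow : t * t ^ η * t ^ (-1 - α) = t ^ (η - α) := by
    rw [show η - α = 1 + η + (-1 - α) by ring, rpow_add ht0, rpow_add ht0, rpow_one]
  rw [jumpIntegrand_add_neg ht0, abs_div, abs_of_pos (mul_pos ht0 hφt), div_eq_mul_inv]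
  calc _ ≤ (2 * K₂ * κ₀ * t ^ 2 + 2 * K₁ * κ₁ * (t * t ^ η)) * (B * t ^ (-1 - α)) :=
        mul_le_mul hnum hden (inv_nonneg.2 (mul_pos ht0 hφt).le) ((abs_nonneg _).trans hnum)
    _ ≤ (2 * K₂ * κ₀ * (t * t ^ η) + 2 * K₁ * κ₁ * (t * t ^ η)) * (B * t ^ (-1 - α)) := by
        gcongr
    _ = (2 * K₂ * κ₀ + 2 * K₁ * κ₁) * B * t ^ (η - α) := by
        rw [← hpow]
        ring

end JumpIntegrand

theorem stmt_9_general (d : ℕ) (i : Fin d) (α₀ α₁ c C η κ₀ κ₁ : ℝ) (φ : ℝ → ℝ)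
    (hα₀ : 0 < α₀)
    (hc : 0 < c)
    (hφpos : ∀ r : ℝ, 0 < r → 0 < φ r)
    (hφmono : ∀ r R : ℝ, 0 < r → r ≤ R → φ r ≤ φ R)
    (hWS : ∀ r R : ℝ, 0 < r → r ≤ R →
      c * (R / r) ^ α₀ ≤ φ R / φ r ∧ φ R / φ r ≤ C * (R / r) ^ α₁)
    (hη₁ : α₁ / 2 < η) (hη₂ : η ≤ 1) (hκ₀ : 1 ≤ κ₀)
    (κ : EuclideanSpace ℝ (Fin d) → EuclideanSpace ℝ (Fin d) → ℝ)
    (hκmeas : Measurable (Function.uncurry κ))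
    (hκbdd : ∀ x y : EuclideanSpace ℝ (Fin d), κ₀⁻¹ ≤ κ x y ∧ κ x y ≤ κ₀)
    (hκreg : ∀ (x h : EuclideanSpace ℝ (Fin d)), ‖h‖ ≤ 1 →
      |κ x (x + h) - κ x x| ≤ κ₁ * ‖h‖ ^ η)
    (g : EuclideanSpace ℝ (Fin d) → ℝ)
    (hg : ContDiff ℝ 2 g) (hgsupp : HasCompactSupport g) :
    ∃ L : EuclideanSpace ℝ (Fin d) → ℝ,
      (∃ M : ℝ, ∀ x, |L x| ≤ M) ∧
      TendstoUniformly
        (fun (ε : ℝ) (x : EuclideanSpace ℝ (Fin d)) =>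
          ∫ t in {t : ℝ | ε < |t|},
            (g (x + t • EuclideanSpace.single i 1) - g x) *
              κ x (x + t • EuclideanSpace.single i 1) / (|t| * φ |t|))
        L (𝓝[>] (0 : ℝ)) := by
  set e : EuclideanSpace ℝ (Fin d) := EuclideanSpace.single i 1
  have he : ‖e‖ = 1 := by simp [e]
  have hφmono' : MonotoneOn φ (Ioi 0) := fun r hr R _ hrR => hφmono r R hr hrR
  obtain ⟨K₁, hK₁⟩ := hg.lipschitzWith_of_hasCompactSupport hgsupp (by norm_num)
  obtain ⟨K₂, hK₂⟩ := (hg.fderiv_right (m := 1) (by norm_num)).lipschitzWith_of_hasCompactSupport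
    (hgsupp.fderiv (𝕜 := ℝ)) one_ne_zero
  obtain ⟨M, hM⟩ := hgsupp.exists_bound_of_continuous hg.continuous
  have hκ : ∀ x y, |κ x y| ≤ κ₀ := fun x y =>
    abs_le.2 ⟨by linarith [(hκbdd x y).1, inv_pos.2 (by linarith : (0 : ℝ) < κ₀)], (hκbdd x y).2⟩
  have hJm := measurable_jumpIntegrand (e := e) hg.continuous hκmeas hφpos hφmono'
  have hdom : ∀ ε, 0 < ε →
      IntegrableOn (fun t : ℝ => 2 * M * κ₀ * (|t| * φ |t|)⁻¹) {t | ε < |t|} := fun ε hε =>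
    (integrableOn_lt_abs_inv_abs_mul hα₀ hc hε hφpos hφmono'
      fun R hR => (hWS ε R hε hR).1).const_mul _
  have hJdom : ∀ x t, ‖jumpIntegrand g κ φ e x t‖ ≤ 2 * M * κ₀ * (|t| * φ |t|)⁻¹ :=
    abs_jumpIntegrand_le hM hκ hφpos
  have hconv := tendstoUniformly_setIntegral_lt_abs (jumpIntegrand g κ φ e) _
    (fun x ε hε => (hdom ε hε).mono' (hJm x).aestronglyMeasurable (ae_of_all _ (hJdom x)))
    (fun x => (hJm x).aestronglyMeasurable)
    ((intervalIntegral.intervalIntegrable_rpow' (by linarith : -1 < η - α₁)).1.const_mul _)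
    (fun x t ht => abs_jumpIntegrand_add_neg_le he (hg.differentiable (by norm_num)) hK₁ hK₂ hκ
      hκreg hη₂ ht (hφpos t ht.1) (inv_mul_le_of_upperScaling ht.1 one_pos (hφpos t ht.1)
        (hφpos 1 one_pos) (hWS t 1 ht.1 ht.2).2) x)
  refine ⟨_, hconv.exists_forall_abs_le ?_, hconv⟩
  filter_upwards [self_mem_nhdsWithin] with ε (hε : 0 < ε)
  exact ⟨_, fun x => norm_integral_le_of_norm_le (hdom ε hε) (ae_of_all _ (hJdom x))⟩

/-- Under (WS) and the conditions (κ-bounds) and (K_η) on `κ`, for any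
`g ∈ C²_c(ℝ^d)` the truncated operators
`L^{(i)}_ε g(x) = ∫_{|t|>ε} (g(x+te_i) - g(x)) κ(x, x+te_i)/(|t| φ(|t|)) dt`
converge uniformly on `ℝ^d`, as `ε ↓ 0`, to a bounded function `L^{(i)} g`. -/
theorem stmt_9 (d : ℕ) (i : Fin d) (α₀ α₁ c C η κ₀ κ₁ : ℝ) (φ : ℝ → ℝ)
    (hα₀ : 0 < α₀) (hαα : α₀ ≤ α₁) (hα₁ : α₁ < 2)
    (hc : 0 < c) (hc1 : c ≤ 1) (hC : 1 ≤ C)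
    (hφpos : ∀ r : ℝ, 0 < r → 0 < φ r)
    (hφmono : ∀ r R : ℝ, 0 < r → r ≤ R → φ r ≤ φ R)
    (hWS : ∀ r R : ℝ, 0 < r → r ≤ R →
      c * (R / r) ^ α₀ ≤ φ R / φ r ∧ φ R / φ r ≤ C * (R / r) ^ α₁)
    (hη₁ : α₁ / 2 < η) (hη₂ : η ≤ 1) (hκ₀ : 1 ≤ κ₀) (hκ₁ : 0 < κ₁)
    (κ : EuclideanSpace ℝ (Fin d) → EuclideanSpace ℝ (Fin d) → ℝ)
    (hκmeas : Measurable (Function.uncurry κ))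
    (hκbdd : ∀ x y : EuclideanSpace ℝ (Fin d), κ₀⁻¹ ≤ κ x y ∧ κ x y ≤ κ₀)
    (hκreg : ∀ (x h : EuclideanSpace ℝ (Fin d)), ‖h‖ ≤ 1 →
      |κ x (x + h) - κ x x| ≤ κ₁ * ‖h‖ ^ η)
    (g : EuclideanSpace ℝ (Fin d) → ℝ)
    (hg : ContDiff ℝ 2 g) (hgsupp : HasCompactSupport g) :
    ∃ L : EuclideanSpace ℝ (Fin d) → ℝ,
      (∃ M : ℝ, ∀ x, |L x| ≤ M) ∧
      TendstoUniformly
        (fun (ε : ℝ) (x : EuclideanSpace ℝ (Fin d)) =>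
          ∫ t in {t : ℝ | ε < |t|},
            (g (x + t • EuclideanSpace.single i 1) - g x) *
              κ x (x + t • EuclideanSpace.single i 1) / (|t| * φ |t|))
        L (𝓝[>] (0 : ℝ)) :=
  stmt_9_general d i α₀ α₁ c C η κ₀ κ₁ φ hα₀ hc hφpos hφmono hWS hη₁ hη₂ hκ₀ κ hκmeas hκbdd hκreg g
    hg hgsupp
end

section
/- Let d ∈ ℕ, i ∈ {1,…,d}, let 0 < α̲ ≤ ᾱ < 2 and let φ satisfy the weak scaling condition (WS). Let η ∈ (ᾱ/2, 1], κ₀ ≥ 1, κ₁ > 0, and let κ : ℝ^d × ℝ^d → ℝ be a measurable function with κ₀^{-1} ≤ κ(x,y) ≤ κ₀ for all x, y ∈ ℝ^d and |κ(x, x+h) − κ(x,x)| ≤ κ₁ |h|^η for all x ∈ ℝ^d and all h ∈ ℝ^d with |h| ≤ 1. Then there exists a constant c > 0, depending only on φ, η, κ₀, κ₁, such that for every function g : ℝ^d → ℝ that is twice continuously differentiable with compact support, every x ∈ ℝ^d, and every r ∈ (0,1): the limit L^{(i)} g(x) := lim_{ε ↓ 0} ∫_{{|t| > ε}} (g(x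 + t e_i) − g(x)) · κ(x, x + t e_i) / (|t| φ(|t|)) dt exists and satisfies |L^{(i)} g(x)| ≤ (c / φ(r)) ( r² ‖D²g‖_∞ + r^{η+1} ‖∇g‖_∞ + ‖g‖_∞ ), where ‖D²g‖_∞ is the supremum norm of the second derivative of g, ‖∇g‖_∞ the supremum norm of the gradient, and ‖g‖_∞ the supremum norm of g. -/
/-!
Pair `t` with `-t`. Near the origin the symmetrized integrand of `L^{(i)} g(x)` is controlled by
the second difference of `g` and by the oscillation of `κ(x, ·)` against the first difference:
it is `O((t ‖D²g‖ + t^η ‖∇g‖) / φ(t))`. Away from the origin it is `O(‖g‖ / (t φ(t)))`. The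
upper half of (WS) gives `1/φ(t) ≤ C (r/t)^ᾱ / φ(r)` for `t ≤ r` and the lower half gives
`1/φ(t) ≤ (r/t)^α̲ / (c φ(r))` for `t ≥ r`. Because `ᾱ < 2`, `ᾱ < 1 + η` and `α̲ > 0`, the
resulting powers of `t` are integrable. So the symmetrized integrand is integrable on `(0, ∞)`,
which gives the principal value, and splitting its integral at `r` gives the bound.
-/

open MeasureTheory Real Filter Topology Set

theorem abs_mul_add_mul_le {a b p q A B K δ : ℝ} (hab : |a + b| ≤ A) (hb : |b| ≤ B)
    (hp : |p| ≤ K) (hpq : |q - p| ≤ δ) : |a * p + b * q| ≤ A * K + B * δ :=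
  calc |a * p + b * q| = |(a + b) * p + b * (q - p)| := by ring_nf
    _ ≤ |a + b| * |p| + |b| * |q - p| := by rw [← abs_mul, ← abs_mul]; exact abs_add_le _ _
    _ ≤ A * K + B * δ := add_le_add (mul_le_mul hab hp (abs_nonneg _) ((abs_nonneg _).trans hab))
        (mul_le_mul hb hpq (abs_nonneg _) ((abs_nonneg _).trans hb))

theorem integrableOn_and_setIntegral_abs_le {F G : ℝ → ℝ} {s : Set ℝ} (hs : MeasurableSet s)
    (hF : AEStronglyMeasurable F (volume.restrict s)) (hG : IntegrableOn G s)
    (hFG : ∀ t ∈ s, |F t| ≤ G t) : IntegrableOn F s ∧ ∫ t in s, |F t| ≤ ∫ t in s, G t := by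
  have hFi : IntegrableOn F s :=
    hG.mono' hF ((ae_restrict_iff' hs).2 (Eventually.of_forall fun t ht => hFG t ht))
  exact ⟨hFi, setIntegral_mono_on hFi.abs hG hs hFG⟩

theorem mul_add_mul_add_mul_le {a b c x y z : ℝ} (ha : 0 ≤ a) (hb : 0 ≤ b) (hc : 0 ≤ c)
    (hx : 0 ≤ x) (hy : 0 ≤ y) (hz : 0 ≤ z) :
    a * x + b * y + c * z ≤ (a + b + c) * (x + y + z) := by
  nlinarith [mul_nonneg ha hy, mul_nonneg ha hz, mul_nonneg hb hx, mul_nonneg hb hz,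
    mul_nonneg hc hx, mul_nonneg hc hy]

section PrincipalValue

variable {E : Type*} [NormedAddCommGroup E] [NormedSpace ℝ E]

theorem tendsto_setIntegral_Ioi_nhdsGT {f : ℝ → E} {a : ℝ} (hf : IntegrableOn f (Ioi a)) :
    Tendsto (fun ε => ∫ t in Ioi ε, f t) (𝓝[>] a) (𝓝 (∫ t in Ioi a, f t)) := by
  have hvol : Tendsto (fun ε => volume (Ioc a ε)) (𝓝[>] a) (𝓝 0) := by
    simp_rw [Real.volume_Ioc]
    rw [← ENNReal.ofReal_zero, ← sub_self a]
    exact (ENNReal.continuous_ofReal.tendsto _).comp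
      ((tendsto_id.sub_const a).mono_left nhdsWithin_le_nhds)
  have hsmall : Tendsto (fun ε => ∫ t in Ioc a ε, f t) (𝓝[>] a) (𝓝 0) := by
    refine ((hf.integrable_indicator measurableSet_Ioi).tendsto_setIntegral_nhds_zero
      hvol).congr fun ε => setIntegral_congr_fun measurableSet_Ioc fun t ht => ?_
    exact indicator_of_mem ht.1 f
  rw [← sub_zero (∫ t in Ioi a, f t)]
  refine (tendsto_const_nhds.sub hsmall).congr' ?_
  filter_upwards [self_mem_nhdsWithin] with ε hε
  rw [← Ioc_union_Ioi_eq_Ioi (le_of_lt hε), setIntegral_union (Ioc_disjoint_Ioi le_rfl)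
    measurableSet_Ioi (hf.mono_set Ioc_subset_Ioi_self) (hf.mono_set (Ioi_subset_Ioi hε.le)),
    add_sub_cancel_left]

theorem setIntegral_abs_gt_eq {f : ℝ → E} {ε : ℝ} (hε : 0 ≤ ε) (hpos : IntegrableOn f (Ioi ε))
    (hneg : IntegrableOn (fun t => f (-t)) (Ioi ε)) :
    ∫ t in {t | ε < |t|}, f t = ∫ t in Ioi ε, (f t + f (-t)) := by
  have hset : {t : ℝ | ε < |t|} = Iio (-ε) ∪ Ioi ε := by
    ext t
    simp only [mem_ofPred_eq, mem_union, mem_Iio, mem_Ioi, lt_abs]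
    constructor <;> rintro (h | h) <;> first | (left; linarith) | (right; linarith)
  have hIio : IntegrableOn f (Iio (-ε)) := by
    have h := IntegrableOn.comp_neg_Iio (c := -ε) (f := fun t => f (-t)) (by rwa [neg_neg])
    simpa only [neg_neg] using h
  rw [hset, setIntegral_union ((Iic_disjoint_Ioi (by linarith)).mono_left Iio_subset_Iic_self)
    measurableSet_Ioi hIio hpos, integral_add hpos hneg, integral_comp_neg_Ioi,
    integral_Iic_eq_integral_Iio, add_comm]

end PrincipalValue

theorem MonotoneOn.measurable_comp_abs {f : ℝ → ℝ} (hf : MonotoneOn f (Ioi 0)) :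
    Measurable fun t => f |t| := by
  have hmono : Monotone fun s : Ioi (0 : ℝ) => f s := fun a b hab => hf a.2 b.2 hab
  refine measurable_of_restrict_of_restrict_compl (measurableSet_singleton 0)
    Subsingleton.measurable ?_
  exact hmono.measurable.comp
    (measurable_subtype_coe.abs.subtype_mk (p := (· ∈ Ioi 0)) (h := fun t => abs_pos.2 t.2))

section Scaling

variable {φ : ℝ → ℝ} {α₀ α₁ c C β r : ℝ}

theorem rpow_div_le_of_scaling_upper (hφ : ∀ t, 0 < t → 0 < φ t) {t : ℝ} (ht : 0 < t)
    (htr : t ≤ r) (hup : φ r / φ t ≤ C * (r / t) ^ α₁) :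
    t ^ β / φ t ≤ C * r ^ α₁ / φ r * t ^ (β - α₁) := by
  have hr := ht.trans_le htr
  have hφt := hφ t ht
  have hφr := hφ r hr
  calc t ^ β / φ t = t ^ β * (φ r / φ t) / φ r := by field_simp
    _ ≤ t ^ β * (C * (r / t) ^ α₁) / φ r := by gcongr
    _ = C * r ^ α₁ / φ r * t ^ (β - α₁) := by
      rw [div_rpow hr.le ht.le, rpow_sub ht]; field_simp

theorem rpow_div_le_of_scaling_lower (hφ : ∀ t, 0 < t → 0 < φ t) (hc : 0 < c) (hr : 0 < r)
    {t : ℝ} (hrt : r ≤ t) (hlow : c * (t / r) ^ α₀ ≤ φ t / φ r) :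
    t ^ β / φ t ≤ r ^ α₀ / (c * φ r) * t ^ (β - α₀) := by
  have ht := hr.trans_le hrt
  have hφt := hφ t ht
  have hφr := hφ r hr
  calc t ^ β / φ t = t ^ β / (φ r * (φ t / φ r)) := by field_simp
    _ ≤ t ^ β / (φ r * (c * (t / r) ^ α₀)) := by gcongr
    _ = r ^ α₀ / (c * φ r) * t ^ (β - α₀) := by
      rw [div_rpow ht.le hr.le, rpow_sub ht]; field_simp

theorem integrableOn_Ioc_rpow_div (hφ : ∀ t, 0 < t → 0 < φ t) (hmono : MonotoneOn φ (Ioi 0))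
    (hr : 0 < r) (hup : ∀ t, 0 < t → t ≤ r → φ r / φ t ≤ C * (r / t) ^ α₁)
    (hβ : α₁ < β + 1) : IntegrableOn (fun t => t ^ β / φ t) (Ioc 0 r) := by
  have hdom : IntegrableOn (fun t => t ^ (β - α₁)) (Ioc 0 r) := by
    rw [← intervalIntegrable_iff_integrableOn_Ioc_of_le hr.le]
    exact intervalIntegral.intervalIntegrable_rpow' (by linarith)
  refine (hdom.const_mul (C * r ^ α₁ / φ r)).mono' ?_ ?_
  · exact ((measurable_id.pow_const β).aemeasurable.div (aemeasurable_restrict_of_monotoneOn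
      measurableSet_Ioc (hmono.mono Ioc_subset_Ioi_self))).aestronglyMeasurable
  refine (ae_restrict_iff' measurableSet_Ioc).2 (Eventually.of_forall fun t ht => ?_)
  rw [norm_of_nonneg (div_nonneg (rpow_nonneg ht.1.le _) (hφ t ht.1).le)]
  exact rpow_div_le_of_scaling_upper hφ ht.1 ht.2 (hup t ht.1 ht.2)

theorem setIntegral_Ioc_rpow_div_le (hφ : ∀ t, 0 < t → 0 < φ t) (hmono : MonotoneOn φ (Ioi 0))
    (hr : 0 < r) (hup : ∀ t, 0 < t → t ≤ r → φ r / φ t ≤ C * (r / t) ^ α₁)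
    (hβ : α₁ < β + 1) :
    ∫ t in Ioc 0 r, t ^ β / φ t ≤ C / (β + 1 - α₁) * r ^ (β + 1) / φ r := by
  have hdom : IntegrableOn (fun t => t ^ (β - α₁)) (Ioc 0 r) := by
    rw [← intervalIntegrable_iff_integrableOn_Ioc_of_le hr.le]
    exact intervalIntegral.intervalIntegrable_rpow' (by linarith)
  have hφr := hφ r hr
  calc ∫ t in Ioc 0 r, t ^ β / φ t ≤ ∫ t in Ioc 0 r, C * r ^ α₁ / φ r * t ^ (β - α₁) :=
        setIntegral_mono_on (integrableOn_Ioc_rpow_div hφ hmono hr hup hβ) (hdom.const_mul _)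
          measurableSet_Ioc fun t ht => rpow_div_le_of_scaling_upper hφ ht.1 ht.2 (hup t ht.1 ht.2)
    _ = C * r ^ α₁ / φ r * (r ^ (β - α₁ + 1) / (β - α₁ + 1)) := by
      rw [integral_const_mul, ← intervalIntegral.integral_of_le hr.le,
        integral_rpow (Or.inl (by linarith)), zero_rpow (by linarith), sub_zero]
    _ = C / (β + 1 - α₁) * r ^ (β + 1) / φ r := by
      rw [show β - α₁ + 1 = β + 1 - α₁ by ring, rpow_sub hr]
      have : 0 < β + 1 - α₁ := by linarith
      field_simp

theorem integrableOn_Ioi_rpow_div (hφ : ∀ t, 0 < t → 0 < φ t) (hmono : MonotoneOn φ (Ioi 0))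
    (hc : 0 < c) (hr : 0 < r) (hlow : ∀ t, r ≤ t → c * (t / r) ^ α₀ ≤ φ t / φ r)
    (hβ : β + 1 < α₀) : IntegrableOn (fun t => t ^ β / φ t) (Ioi r) := by
  refine ((integrableOn_Ioi_rpow_of_lt (a := β - α₀) (by linarith) hr).const_mul
    (r ^ α₀ / (c * φ r))).mono' ?_ ?_
  · exact ((measurable_id.pow_const β).aemeasurable.div (aemeasurable_restrict_of_monotoneOn
      measurableSet_Ioi (hmono.mono (Ioi_subset_Ioi hr.le)))).aestronglyMeasurable
  refine (ae_restrict_iff' measurableSet_Ioi).2 (Eventually.of_forall fun t ht => ?_)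
  have ht0 : 0 < t := hr.trans ht
  rw [norm_of_nonneg (div_nonneg (rpow_nonneg ht0.le _) (hφ t ht0).le)]
  exact rpow_div_le_of_scaling_lower hφ hc hr ht.le (hlow t ht.le)

theorem setIntegral_Ioi_rpow_div_le (hφ : ∀ t, 0 < t → 0 < φ t) (hmono : MonotoneOn φ (Ioi 0))
    (hc : 0 < c) (hr : 0 < r) (hlow : ∀ t, r ≤ t → c * (t / r) ^ α₀ ≤ φ t / φ r)
    (hβ : β + 1 < α₀) :
    ∫ t in Ioi r, t ^ β / φ t ≤ r ^ (β + 1) / (c * (α₀ - β - 1) * φ r) := by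
  have hφr := hφ r hr
  calc ∫ t in Ioi r, t ^ β / φ t ≤ ∫ t in Ioi r, r ^ α₀ / (c * φ r) * t ^ (β - α₀) :=
        setIntegral_mono_on (integrableOn_Ioi_rpow_div hφ hmono hc hr hlow hβ)
          ((integrableOn_Ioi_rpow_of_lt (by linarith) hr).const_mul _) measurableSet_Ioi
          fun t ht => rpow_div_le_of_scaling_lower hφ hc hr ht.le (hlow t ht.le)
    _ = r ^ α₀ / (c * φ r) * (-r ^ (β - α₀ + 1) / (β - α₀ + 1)) := by
      rw [integral_const_mul, integral_Ioi_rpow_of_lt (by linarith) hr]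
    _ = r ^ (β + 1) / (c * (α₀ - β - 1) * φ r) := by
      rw [show β - α₀ + 1 = β + 1 - α₀ by ring, rpow_sub hr]
      have h₁ : β + 1 - α₀ ≠ 0 := by linarith
      have h₂ : α₀ - β - 1 ≠ 0 := by linarith
      field_simp
      ring

end Scaling

/-- With `f t = g (x + t eᵢ) - g x` and `k t = κ (x, x + t eᵢ)` this is the integrand of
`L^{(i)} g(x)`. -/
noncomputable def kernelIntegrand (φ f k : ℝ → ℝ) (t : ℝ) : ℝ := f t * k t / (|t| * φ |t|)

section KernelIntegrand

variable {φ f k : ℝ → ℝ}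

theorem measurable_kernelIntegrand (hmono : MonotoneOn φ (Ioi 0)) (hf : Measurable f)
    (hk : Measurable k) : Measurable (kernelIntegrand φ f k) :=
  (hf.mul hk).div (measurable_id.abs.mul hmono.measurable_comp_abs)

theorem abs_kernelIntegrand_le {M₀ κ₀ : ℝ} (hφ : ∀ t, 0 < t → 0 < φ t)
    (hf₀ : ∀ t, |f t| ≤ M₀) (hk₀ : ∀ t, |k t| ≤ κ₀) {t : ℝ} (ht : t ≠ 0) :
    |kernelIntegrand φ f k t| ≤ M₀ * κ₀ * (|t| ^ (-1 : ℝ) / φ |t|) := by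
  have hden : 0 < |t| * φ |t| := mul_pos (abs_pos.2 ht) (hφ _ (abs_pos.2 ht))
  have hM₀ : 0 ≤ M₀ := (abs_nonneg _).trans (hf₀ t)
  rw [kernelIntegrand, abs_div, abs_mul, abs_of_pos hden, rpow_neg_one, inv_div_left,
    mul_comm (φ |t|), ← div_eq_mul_inv]
  gcongr
  exacts [hf₀ t, hk₀ t]

theorem abs_kernelIntegrand_add_neg_le {M₁ M₂ κ₀ κ₁ η : ℝ} (hφ : ∀ t, 0 < t → 0 < φ t)
    (hf₁ : ∀ t, |f t| ≤ M₁ * |t|) (hf₂ : ∀ t, |f t + f (-t)| ≤ M₂ * t ^ 2)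
    (hk₀ : ∀ t, |k t| ≤ κ₀) (hk₁ : ∀ t, |t| ≤ 1 → |k t - k (-t)| ≤ κ₁ * |t| ^ η)
    {t : ℝ} (ht : 0 < t) (ht₁ : t ≤ 1) :
    |kernelIntegrand φ f k t + kernelIntegrand φ f k (-t)| ≤
      M₂ * κ₀ * (t ^ (1 : ℝ) / φ t) + M₁ * κ₁ * (t ^ η / φ t) := by
  have hφt := hφ t ht
  have hnum : |f t * k t + f (-t) * k (-t)| ≤ M₂ * t ^ 2 * κ₀ + M₁ * t * (κ₁ * t ^ η) := by
    refine abs_mul_add_mul_le (hf₂ t) ?_ (hk₀ t) ?_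
    · simpa [abs_of_pos ht] using hf₁ (-t)
    · simpa [abs_sub_comm, abs_of_pos ht] using hk₁ t (by rwa [abs_of_pos ht])
  have hsum : kernelIntegrand φ f k t + kernelIntegrand φ f k (-t) =
      (f t * k t + f (-t) * k (-t)) / (t * φ t) := by
    simp only [kernelIntegrand, abs_neg, abs_of_pos ht, add_div]
  rw [hsum, abs_div, abs_of_pos (mul_pos ht hφt), rpow_one]
  calc _ ≤ (M₂ * t ^ 2 * κ₀ + M₁ * t * (κ₁ * t ^ η)) / (t * φ t) := by gcongr
    _ = _ := by field_simp

theorem kernelIntegrand_comp_neg :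
    (fun t => kernelIntegrand φ f k (-t)) =
      kernelIntegrand φ (fun t => f (-t)) (fun t => k (-t)) := by
  funext t; simp only [kernelIntegrand, abs_neg]

variable {α₀ α₁ c C η κ₀ κ₁ M₀ M₁ M₂ r : ℝ}

theorem integrableOn_Ioi_kernelIntegrand (hφ : ∀ t, 0 < t → 0 < φ t)
    (hmono : MonotoneOn φ (Ioi 0)) (hc : 0 < c) (hr : 0 < r)
    (hlow : ∀ t, r ≤ t → c * (t / r) ^ α₀ ≤ φ t / φ r) (hα₀ : 0 < α₀)
    (hf : Measurable f) (hk : Measurable k) (hf₀ : ∀ t, |f t| ≤ M₀) (hk₀ : ∀ t, |k t| ≤ κ₀) :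
    IntegrableOn (kernelIntegrand φ f k) (Ioi r) := by
  refine (integrableOn_and_setIntegral_abs_le measurableSet_Ioi
    (measurable_kernelIntegrand hmono hf hk).aestronglyMeasurable
    ((integrableOn_Ioi_rpow_div hφ hmono hc hr hlow (β := -1) (by linarith)).const_mul (M₀ * κ₀))
    fun t ht => ?_).1
  have ht0 : 0 < t := hr.trans ht
  simpa only [abs_of_pos ht0] using abs_kernelIntegrand_le hφ hf₀ hk₀ ht0.ne'

theorem setIntegral_Ioi_abs_kernelIntegrand_add_neg_le (hφ : ∀ t, 0 < t → 0 < φ t)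
    (hmono : MonotoneOn φ (Ioi 0)) (hc : 0 < c) (hr : 0 < r)
    (hlow : ∀ t, r ≤ t → c * (t / r) ^ α₀ ≤ φ t / φ r) (hα₀ : 0 < α₀)
    (hf : Measurable f) (hk : Measurable k) (hf₀ : ∀ t, |f t| ≤ M₀) (hk₀ : ∀ t, |k t| ≤ κ₀) :
    ∫ t in Ioi r, |kernelIntegrand φ f k t + kernelIntegrand φ f k (-t)| ≤
      2 * κ₀ / (c * α₀) * M₀ / φ r := by
  have hM₀κ₀ : 0 ≤ M₀ * κ₀ :=
    mul_nonneg ((abs_nonneg _).trans (hf₀ 0)) ((abs_nonneg _).trans (hk₀ 0))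
  have hi := integrableOn_Ioi_rpow_div hφ hmono hc hr hlow (β := -1) (by linarith)
  have hq := measurable_kernelIntegrand (f := f) (k := k) hmono hf hk
  refine ((integrableOn_and_setIntegral_abs_le
    (F := fun t => kernelIntegrand φ f k t + kernelIntegrand φ f k (-t)) measurableSet_Ioi
    (hq.add (hq.comp measurable_neg)).aestronglyMeasurable
    (hi.const_mul (2 * (M₀ * κ₀))) fun t ht => ?_).2).trans ?_
  · have ht0 : 0 < t := hr.trans ht
    have h₁ := abs_kernelIntegrand_le hφ hf₀ hk₀ ht0.ne'
    have h₂ := abs_kernelIntegrand_le hφ hf₀ hk₀ (neg_ne_zero.2 ht0.ne')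
    rw [abs_neg, abs_of_pos ht0] at h₂
    rw [abs_of_pos ht0] at h₁
    linarith [abs_add_le (kernelIntegrand φ f k t) (kernelIntegrand φ f k (-t))]
  rw [integral_const_mul]
  calc 2 * (M₀ * κ₀) * ∫ t in Ioi r, t ^ (-1 : ℝ) / φ t
      ≤ 2 * (M₀ * κ₀) * (r ^ (-1 + 1 : ℝ) / (c * (α₀ - -1 - 1) * φ r)) := by
        gcongr; exact setIntegral_Ioi_rpow_div_le hφ hmono hc hr hlow (by linarith)
    _ = 2 * κ₀ / (c * α₀) * M₀ / φ r := by
        rw [show (-1 + 1 : ℝ) = 0 by norm_num, rpow_zero, show α₀ - -1 - 1 = α₀ by ring]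
        ring

theorem setIntegral_Ioc_abs_kernelIntegrand_add_neg_le (hφ : ∀ t, 0 < t → 0 < φ t)
    (hmono : MonotoneOn φ (Ioi 0)) (hr : 0 < r) (hr₁ : r ≤ 1)
    (hup : ∀ t, 0 < t → t ≤ r → φ r / φ t ≤ C * (r / t) ^ α₁) (hα₁ : α₁ < 2) (hη : α₁ < η + 1)
    (hf : Measurable f) (hk : Measurable k)
    (hf₁ : ∀ t, |f t| ≤ M₁ * |t|) (hf₂ : ∀ t, |f t + f (-t)| ≤ M₂ * t ^ 2)
    (hk₀ : ∀ t, |k t| ≤ κ₀) (hk₁ : ∀ t, |t| ≤ 1 → |k t - k (-t)| ≤ κ₁ * |t| ^ η) :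
    IntegrableOn (fun t => kernelIntegrand φ f k t + kernelIntegrand φ f k (-t)) (Ioc 0 r) ∧
    ∫ t in Ioc 0 r, |kernelIntegrand φ f k t + kernelIntegrand φ f k (-t)| ≤
      (C * κ₀ / (2 - α₁) * r ^ 2 * M₂ + C * κ₁ / (η + 1 - α₁) * r ^ (η + 1) * M₁) / φ r := by
  have hM₂κ₀ : 0 ≤ M₂ * κ₀ := mul_nonneg (by simpa using (abs_nonneg _).trans (hf₂ 1))
    ((abs_nonneg _).trans (hk₀ 0))
  have hM₁κ₁ : 0 ≤ M₁ * κ₁ := mul_nonneg (by simpa using (abs_nonneg _).trans (hf₁ 1))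
    (by simpa using (abs_nonneg _).trans (hk₁ 1 (by simp)))
  have hi₁ := integrableOn_Ioc_rpow_div hφ hmono hr hup (β := 1) (by linarith)
  have hi₂ := integrableOn_Ioc_rpow_div hφ hmono hr hup (β := η) hη
  have hq := measurable_kernelIntegrand (f := f) (k := k) hmono hf hk
  obtain ⟨hint, hle⟩ := integrableOn_and_setIntegral_abs_le
    (F := fun t => kernelIntegrand φ f k t + kernelIntegrand φ f k (-t))
    (G := fun t => M₂ * κ₀ * (t ^ (1 : ℝ) / φ t) + M₁ * κ₁ * (t ^ η / φ t)) measurableSet_Ioc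
    (hq.add (hq.comp measurable_neg)).aestronglyMeasurable
    ((hi₁.const_mul (M₂ * κ₀)).add (hi₂.const_mul (M₁ * κ₁)))
    fun t ht => abs_kernelIntegrand_add_neg_le hφ hf₁ hf₂ hk₀ hk₁ ht.1 (ht.2.trans hr₁)
  refine ⟨hint, hle.trans ?_⟩
  rw [integral_add (hi₁.const_mul _) (hi₂.const_mul _), integral_const_mul, integral_const_mul]
  calc _ ≤ M₂ * κ₀ * (C / (1 + 1 - α₁) * r ^ (1 + 1 : ℝ) / φ r)
        + M₁ * κ₁ * (C / (η + 1 - α₁) * r ^ (η + 1) / φ r) := by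
        gcongr
        exacts [setIntegral_Ioc_rpow_div_le hφ hmono hr hup (by linarith),
          setIntegral_Ioc_rpow_div_le hφ hmono hr hup hη]
    _ = _ := by
        rw [show (1 + 1 : ℝ) = (2 : ℕ) by norm_num, rpow_natCast]
        ring_nf

theorem exists_tendsto_setIntegral_kernelIntegrand (hφ : ∀ t, 0 < t → 0 < φ t)
    (hmono : MonotoneOn φ (Ioi 0))
    (hWS : ∀ r R : ℝ, 0 < r → r ≤ R →
      c * (R / r) ^ α₀ ≤ φ R / φ r ∧ φ R / φ r ≤ C * (R / r) ^ α₁)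
    (hα₀ : 0 < α₀) (hc : 0 < c) (hα₁ : α₁ < 2) (hη : α₁ < η + 1)
    (hf : Measurable f) (hk : Measurable k) (hf₀ : ∀ t, |f t| ≤ M₀)
    (hf₁ : ∀ t, |f t| ≤ M₁ * |t|) (hf₂ : ∀ t, |f t + f (-t)| ≤ M₂ * t ^ 2)
    (hk₀ : ∀ t, |k t| ≤ κ₀) (hk₁ : ∀ t, |t| ≤ 1 → |k t - k (-t)| ≤ κ₁ * |t| ^ η) :
    ∃ L, Tendsto (fun ε => ∫ t in {t | ε < |t|}, kernelIntegrand φ f k t) (𝓝[>] 0) (𝓝 L) ∧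
      ∀ r, 0 < r → r ≤ 1 → |L| ≤ (C * κ₀ / (2 - α₁) * r ^ 2 * M₂ +
        C * κ₁ / (η + 1 - α₁) * r ^ (η + 1) * M₁ + 2 * κ₀ / (c * α₀) * M₀) / φ r := by
  have hup (r : ℝ) : ∀ t, 0 < t → t ≤ r → φ r / φ t ≤ C * (r / t) ^ α₁ :=
    fun t ht htr => (hWS t r ht htr).2
  have hlow (r : ℝ) (hr : 0 < r) : ∀ t, r ≤ t → c * (t / r) ^ α₀ ≤ φ t / φ r :=
    fun t hrt => (hWS r t hr hrt).1
  have hpos (ε : ℝ) (hε : 0 < ε) : IntegrableOn (kernelIntegrand φ f k) (Ioi ε) :=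
    integrableOn_Ioi_kernelIntegrand hφ hmono hc hε (hlow ε hε) hα₀ hf hk hf₀ hk₀
  have hneg (ε : ℝ) (hε : 0 < ε) : IntegrableOn (fun t => kernelIntegrand φ f k (-t)) (Ioi ε) := by
    rw [kernelIntegrand_comp_neg]
    exact integrableOn_Ioi_kernelIntegrand hφ hmono hc hε (hlow ε hε) hα₀
      (hf.comp measurable_neg) (hk.comp measurable_neg) (fun t => hf₀ (-t)) (fun t => hk₀ (-t))
  have hnear (r : ℝ) (hr : 0 < r) (hr₁ : r ≤ 1) :=
    setIntegral_Ioc_abs_kernelIntegrand_add_neg_le hφ hmono hr hr₁ (hup r) hα₁ hη hf hk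
      hf₁ hf₂ hk₀ hk₁
  have hH : IntegrableOn (fun t => kernelIntegrand φ f k t + kernelIntegrand φ f k (-t))
      (Ioi 0) := by
    rw [← Ioc_union_Ioi_eq_Ioi zero_le_one]
    exact (hnear 1 one_pos le_rfl).1.union ((hpos 1 one_pos).add (hneg 1 one_pos))
  refine ⟨∫ t in Ioi 0, (kernelIntegrand φ f k t + kernelIntegrand φ f k (-t)), ?_,
    fun r hr hr₁ => ?_⟩
  · refine (tendsto_setIntegral_Ioi_nhdsGT hH).congr' ?_
    filter_upwards [self_mem_nhdsWithin] with ε hε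
    exact (setIntegral_abs_gt_eq hε.le (hpos ε hε) (hneg ε hε)).symm
  refine abs_integral_le_integral_abs.trans ?_
  calc
    _ = (∫ t in Ioc 0 r, |kernelIntegrand φ f k t + kernelIntegrand φ f k (-t)|) +
        ∫ t in Ioi r, |kernelIntegrand φ f k t + kernelIntegrand φ f k (-t)| := by
      rw [← setIntegral_union (Ioc_disjoint_Ioi le_rfl) measurableSet_Ioi
        (hnear r hr hr₁).1.abs ((hpos r hr).add (hneg r hr)).abs, Ioc_union_Ioi_eq_Ioi hr.le]
    _ ≤ _ := by
      rw [add_div]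
      exact add_le_add (hnear r hr hr₁).2
        (setIntegral_Ioi_abs_kernelIntegrand_add_neg_le hφ hmono hc hr (hlow r hr) hα₀ hf hk
          hf₀ hk₀)

end KernelIntegrand

section SecondDifference

variable {E F : Type*} [NormedAddCommGroup E] [NormedAddCommGroup F]

theorem norm_le_iSup_norm {f : E → F} (hf : Continuous f) (hs : HasCompactSupport f) (y : E) :
    ‖f y‖ ≤ ⨆ z, ‖f z‖ :=
  le_ciSup (hf.norm.bddAbove_range_of_hasCompactSupport hs.norm) y

variable [NormedSpace ℝ E] [NormedSpace ℝ F]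

theorem norm_sub_add_sub_le_of_norm_iteratedFDeriv_two_le {g : E → F} {M : ℝ}
    (hg : ContDiff ℝ 2 g) (hM : ∀ y, ‖iteratedFDeriv ℝ 2 g y‖ ≤ M) (x h : E) :
    ‖g (x + h) - g x + (g (x - h) - g x)‖ ≤ 2 * M * ‖h‖ ^ 2 := by
  have hd : Differentiable ℝ g := hg.differentiable (by norm_num)
  have hd' : Differentiable ℝ (fderiv ℝ g) :=
    (hg.fderiv_right (m := 1) (by norm_num)).differentiable (by norm_num)
  have hlip (a b : E) : ‖fderiv ℝ g a - fderiv ℝ g b‖ ≤ M * ‖a - b‖ := by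
    refine convex_univ.norm_image_sub_le_of_norm_fderiv_le (fun y _ => hd' y) (fun y _ => ?_)
      trivial trivial
    rw [← norm_iteratedFDeriv_one, norm_iteratedFDeriv_fderiv]
    exact hM y
  have hw (s : ℝ) : HasDerivAt (fun s : ℝ => g (x + s • h) + g (x - s • h))
      (fderiv ℝ g (x + s • h) h - fderiv ℝ g (x - s • h) h) s := by
    have hp : HasDerivAt (fun s : ℝ => x + s • h) h s := by
      simpa using ((hasDerivAt_id s).smul_const h).const_add x
    have hm : HasDerivAt (fun s : ℝ => x - s • h) (-h) s := by
      simpa using ((hasDerivAt_id s).smul_const h).const_sub x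
    have := ((hd _).hasFDerivAt.comp_hasDerivAt s hp).add ((hd _).hasFDerivAt.comp_hasDerivAt s hm)
    rwa [map_neg, ← sub_eq_add_neg] at this
  have hbound : ∀ s ∈ Ico (0 : ℝ) 1,
      ‖fderiv ℝ g (x + s • h) h - fderiv ℝ g (x - s • h) h‖ ≤ 2 * M * ‖h‖ ^ 2 := by
    intro s hs
    have hM0 : 0 ≤ M := (norm_nonneg _).trans (hM x)
    calc _ = ‖(fderiv ℝ g (x + s • h) - fderiv ℝ g (x - s • h)) h‖ := rfl
      _ ≤ M * ‖(x + s • h) - (x - s • h)‖ * ‖h‖ := (ContinuousLinearMap.le_opNorm _ _).trans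
          (by gcongr; exact hlip _ _)
      _ = s * (2 * M * ‖h‖ ^ 2) := by
          rw [add_sub_sub_cancel, ← two_smul ℝ, smul_smul, norm_smul, Real.norm_of_nonneg
            (by linarith [hs.1])]
          ring
      _ ≤ 2 * M * ‖h‖ ^ 2 :=
          mul_le_of_le_one_left (mul_nonneg (mul_nonneg zero_le_two hM0) (sq_nonneg _)) hs.2.le
  have := norm_image_sub_le_of_norm_deriv_le_segment' (fun s _ => (hw s).hasDerivWithinAt)
    hbound 1 (right_mem_Icc.2 zero_le_one)
  rw [sub_zero, mul_one] at this
  convert this using 2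
  simp only [one_smul, zero_smul, add_zero, sub_zero]
  abel

end SecondDifference

theorem abs_sub_sub_le_of_abs_sub_le {E : Type*} [NormedAddCommGroup E] {K : E → ℝ} {x h : E}
    {κ₁ η : ℝ} (hK : ∀ h, ‖h‖ ≤ 1 → |K (x + h) - K x| ≤ κ₁ * ‖h‖ ^ η) (hh : ‖h‖ ≤ 1) :
    |K (x + h) - K (x - h)| ≤ 2 * κ₁ * ‖h‖ ^ η := by
  have h₁ := hK h hh
  have h₂ := hK (-h) (by rwa [norm_neg])
  rw [norm_neg, ← sub_eq_add_neg] at h₂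
  linarith [abs_sub_le (K (x + h)) (K x) (K (x - h)), abs_sub_comm (K x) (K (x - h))]

theorem exists_tendsto_setIntegral_sub_mul_kernel {E : Type*} [NormedAddCommGroup E]
    [NormedSpace ℝ E] [MeasurableSpace E] [BorelSpace E] {φ : ℝ → ℝ}
    {α₀ α₁ c C η κ₀ κ₁ : ℝ} (hφ : ∀ t, 0 < t → 0 < φ t) (hmono : MonotoneOn φ (Ioi 0))
    (hWS : ∀ r R : ℝ, 0 < r → r ≤ R →
      c * (R / r) ^ α₀ ≤ φ R / φ r ∧ φ R / φ r ≤ C * (R / r) ^ α₁)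
    (hα₀ : 0 < α₀) (hc : 0 < c) (hC : 0 ≤ C) (hα₁ : α₁ < 2) (hη : α₁ < η + 1) (hκ₁ : 0 ≤ κ₁)
    {K : E → ℝ} (hKmeas : Measurable K) (hK₀ : ∀ y, |K y| ≤ κ₀) {g : E → ℝ}
    (hg : ContDiff ℝ 2 g) (hgc : HasCompactSupport g) (x v : E) (hv : ‖v‖ = 1)
    (hK₁ : ∀ h, ‖h‖ ≤ 1 → |K (x + h) - K x| ≤ κ₁ * ‖h‖ ^ η) :
    ∃ L, Tendsto (fun ε => ∫ t in {t : ℝ | ε < |t|},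
        (g (x + t • v) - g x) * K (x + t • v) / (|t| * φ |t|)) (𝓝[>] 0) (𝓝 L) ∧
      ∀ r, 0 < r → r ≤ 1 → |L| ≤
        (2 * C * κ₀ / (2 - α₁) + 2 * C * κ₁ / (η + 1 - α₁) + 4 * κ₀ / (c * α₀)) / φ r *
          (r ^ 2 * (⨆ y, ‖iteratedFDeriv ℝ 2 g y‖) + r ^ (η + 1) * (⨆ y, ‖fderiv ℝ g y‖) +
            ⨆ y, |g y|) := by
  have hnorm (t : ℝ) : ‖t • v‖ = |t| := by rw [norm_smul, hv, mul_one, norm_eq_abs]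
  set S₂ := ⨆ y, ‖iteratedFDeriv ℝ 2 g y‖
  set S₁ := ⨆ y, ‖fderiv ℝ g y‖
  set S₀ := ⨆ y, |g y|
  have hS₂ (y : E) : ‖iteratedFDeriv ℝ 2 g y‖ ≤ S₂ :=
    norm_le_iSup_norm (hg.continuous_iteratedFDeriv (by norm_num)) (hgc.iteratedFDeriv 2) y
  have hS₁ (y : E) : ‖fderiv ℝ g y‖ ≤ S₁ :=
    norm_le_iSup_norm (hg.continuous_fderiv (by norm_num)) (hgc.fderiv (𝕜 := ℝ)) y
  have hS₀ (y : E) : |g y| ≤ S₀ := by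
    simpa only [norm_eq_abs] using norm_le_iSup_norm hg.continuous hgc y
  obtain ⟨L, hL, hLle⟩ := exists_tendsto_setIntegral_kernelIntegrand
    (f := fun t => g (x + t • v) - g x) (k := fun t => K (x + t • v))
    (M₀ := 2 * S₀) (M₂ := 2 * S₂) (κ₁ := 2 * κ₁) hφ hmono
    hWS hα₀ hc hα₁ hη ((hg.continuous.comp (by fun_prop)).sub continuous_const).measurable
    (hKmeas.comp (by fun_prop))
    (fun t => (abs_sub _ _).trans (by linarith [hS₀ (x + t • v), hS₀ x]))
    (fun t => by
      simpa [hnorm] using convex_univ.norm_image_sub_le_of_norm_fderiv_le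
        (fun y _ => hg.differentiable (by norm_num) y) (fun y _ => hS₁ y) (mem_univ x)
        (mem_univ (x + t • v)))
    (fun t => by
      simpa only [neg_smul, ← sub_eq_add_neg, norm_eq_abs, hnorm, sq_abs] using
        norm_sub_add_sub_le_of_norm_iteratedFDeriv_two_le hg hS₂ x (t • v))
    (fun t => hK₀ _)
    (fun t ht => by
      simpa only [neg_smul, ← sub_eq_add_neg, hnorm] using
        abs_sub_sub_le_of_abs_sub_le hK₁ (h := t • v) (by rwa [hnorm]))
  refine ⟨L, hL, fun r hr hr₁ => (hLle r hr hr₁).trans ?_⟩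
  have hκ₀ : 0 ≤ κ₀ := (abs_nonneg _).trans (hK₀ x)
  have hA₂ : 0 ≤ 2 * (C * κ₀ / (2 - α₁)) := by have := sub_pos.2 hα₁; positivity
  have hA₁ : 0 ≤ C * (2 * κ₁) / (η + 1 - α₁) := by have := sub_pos.2 hη; positivity
  have hA₀ : 0 ≤ 2 * (2 * κ₀ / (c * α₀)) := by positivity
  have hX₂ := mul_nonneg (pow_nonneg hr.le 2) ((norm_nonneg _).trans (hS₂ x))
  have hX₁ := mul_nonneg (rpow_nonneg hr.le (η + 1)) ((norm_nonneg _).trans (hS₁ x))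
  rw [div_mul_eq_mul_div _ (φ r)]
  refine div_le_div_of_nonneg_right ?_ (hφ r hr).le
  calc _ = 2 * (C * κ₀ / (2 - α₁)) * (r ^ 2 * S₂) + C * (2 * κ₁) / (η + 1 - α₁) *
        (r ^ (η + 1) * S₁) + 2 * (2 * κ₀ / (c * α₀)) * S₀ := by ring
    _ ≤ _ := (mul_add_mul_add_mul_le hA₂ hA₁ hA₀ hX₂ hX₁ ((abs_nonneg _).trans (hS₀ x))).trans_eq
        (by ring)

theorem stmt_10_general (d : ℕ) (i : Fin d) (α₀ α₁ c C η κ₀ κ₁ : ℝ) (φ : ℝ → ℝ)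
    (hα₀ : 0 < α₀) (hα₁ : α₁ < 2)
    (hc : 0 < c) (hC : 1 ≤ C)
    (hφpos : ∀ r : ℝ, 0 < r → 0 < φ r)
    (hφmono : ∀ r R : ℝ, 0 < r → r ≤ R → φ r ≤ φ R)
    (hWS : ∀ r R : ℝ, 0 < r → r ≤ R →
      c * (R / r) ^ α₀ ≤ φ R / φ r ∧ φ R / φ r ≤ C * (R / r) ^ α₁)
    (hη₁ : α₁ / 2 < η) (hκ₀ : 1 ≤ κ₀) (hκ₁ : 0 < κ₁)
    (κ : EuclideanSpace ℝ (Fin d) → EuclideanSpace ℝ (Fin d) → ℝ)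
    (hκmeas : Measurable (Function.uncurry κ))
    (hκbdd : ∀ x y : EuclideanSpace ℝ (Fin d), κ₀⁻¹ ≤ κ x y ∧ κ x y ≤ κ₀)
    (hκreg : ∀ (x h : EuclideanSpace ℝ (Fin d)), ‖h‖ ≤ 1 →
      |κ x (x + h) - κ x x| ≤ κ₁ * ‖h‖ ^ η) :
    ∃ c' : ℝ, 0 < c' ∧
      ∀ g : EuclideanSpace ℝ (Fin d) → ℝ, ContDiff ℝ 2 g → HasCompactSupport g →
        ∀ x : EuclideanSpace ℝ (Fin d), ∃ L : ℝ,
          Tendsto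
            (fun ε : ℝ =>
              ∫ t in {t : ℝ | ε < |t|},
                (g (x + t • EuclideanSpace.single i 1) - g x) *
                  κ x (x + t • EuclideanSpace.single i 1) / (|t| * φ |t|))
            (𝓝[>] (0 : ℝ)) (𝓝 L) ∧
          ∀ r : ℝ, 0 < r → r < 1 →
            |L| ≤ c' / φ r *
              (r ^ 2 * (⨆ y : EuclideanSpace ℝ (Fin d), ‖iteratedFDeriv ℝ 2 g y‖) +
               r ^ (η + 1) * (⨆ y : EuclideanSpace ℝ (Fin d), ‖fderiv ℝ g y‖) +
               ⨆ y : EuclideanSpace ℝ (Fin d), |g y|) := by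
  have hη : α₁ < η + 1 := by linarith
  have hκ (x y : EuclideanSpace ℝ (Fin d)) : |κ x y| ≤ κ₀ :=
    abs_le.2 ⟨by linarith [(hκbdd x y).1, inv_pos.2 (by linarith : (0 : ℝ) < κ₀)], (hκbdd x y).2⟩
  refine ⟨2 * C * κ₀ / (2 - α₁) + 2 * C * κ₁ / (η + 1 - α₁) + 4 * κ₀ / (c * α₀), ?_,
    fun g hg hgc x => ?_⟩
  · have := sub_pos.2 hα₁
    have := sub_pos.2 hη
    positivity
  obtain ⟨L, hL, hLle⟩ := exists_tendsto_setIntegral_sub_mul_kernel hφpos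
    (fun a ha b _ hab => hφmono a b ha hab) hWS hα₀ hc (by linarith) hα₁ hη hκ₁.le
    hκmeas.of_uncurry_left (hκ x) hg hgc x (EuclideanSpace.single i 1) (by simp) (hκreg x)
  exact ⟨L, hL, fun r hr hr₁ => hLle r hr hr₁.le⟩

/-- Under (WS) and the conditions (κ-bounds) and (K_η) on `κ`, there is a
constant `c' > 0` (depending only on `φ, η, κ₀, κ₁`) such that for every
`g ∈ C²_c(ℝ^d)`, every `x` and every `r ∈ (0,1)`, the limit
`L^{(i)} g(x) = lim_{ε↓0} ∫_{|t|>ε} (g(x+te_i) - g(x)) κ(x, x+te_i)/(|t| φ(|t|)) dt`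
exists and `|L^{(i)} g(x)| ≤ (c'/φ(r)) (r² ‖D²g‖_∞ + r^{η+1} ‖∇g‖_∞ + ‖g‖_∞)`. -/
theorem stmt_10 (d : ℕ) (i : Fin d) (α₀ α₁ c C η κ₀ κ₁ : ℝ) (φ : ℝ → ℝ)
    (hα₀ : 0 < α₀) (hαα : α₀ ≤ α₁) (hα₁ : α₁ < 2)
    (hc : 0 < c) (hc1 : c ≤ 1) (hC : 1 ≤ C)
    (hφpos : ∀ r : ℝ, 0 < r → 0 < φ r)
    (hφmono : ∀ r R : ℝ, 0 < r → r ≤ R → φ r ≤ φ R)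
    (hWS : ∀ r R : ℝ, 0 < r → r ≤ R →
      c * (R / r) ^ α₀ ≤ φ R / φ r ∧ φ R / φ r ≤ C * (R / r) ^ α₁)
    (hη₁ : α₁ / 2 < η) (hη₂ : η ≤ 1) (hκ₀ : 1 ≤ κ₀) (hκ₁ : 0 < κ₁)
    (κ : EuclideanSpace ℝ (Fin d) → EuclideanSpace ℝ (Fin d) → ℝ)
    (hκmeas : Measurable (Function.uncurry κ))
    (hκbdd : ∀ x y : EuclideanSpace ℝ (Fin d), κ₀⁻¹ ≤ κ x y ∧ κ x y ≤ κ₀)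
    (hκreg : ∀ (x h : EuclideanSpace ℝ (Fin d)), ‖h‖ ≤ 1 →
      |κ x (x + h) - κ x x| ≤ κ₁ * ‖h‖ ^ η) :
    ∃ c' : ℝ, 0 < c' ∧
      ∀ g : EuclideanSpace ℝ (Fin d) → ℝ, ContDiff ℝ 2 g → HasCompactSupport g →
        ∀ x : EuclideanSpace ℝ (Fin d), ∃ L : ℝ,
          Tendsto
            (fun ε : ℝ =>
              ∫ t in {t : ℝ | ε < |t|},
                (g (x + t • EuclideanSpace.single i 1) - g x) *
                  κ x (x + t • EuclideanSpace.single i 1) / (|t| * φ |t|))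
            (𝓝[>] (0 : ℝ)) (𝓝 L) ∧
          ∀ r : ℝ, 0 < r → r < 1 →
            |L| ≤ c' / φ r *
              (r ^ 2 * (⨆ y : EuclideanSpace ℝ (Fin d), ‖iteratedFDeriv ℝ 2 g y‖) +
               r ^ (η + 1) * (⨆ y : EuclideanSpace ℝ (Fin d), ‖fderiv ℝ g y‖) +
               ⨆ y : EuclideanSpace ℝ (Fin d), |g y|) :=
  stmt_10_general d i α₀ α₁ c C η κ₀ κ₁ φ hα₀ hα₁ hc hC hφpos hφmono hWS hη₁ hκ₀ hκ₁ κ hκmeas hκbdd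
    hκreg
end

section
/- Let d ≥ 1, R > 0, and let D ⊆ ℝ^d be an open set. Write a point y ∈ ℝ^d as y = (ỹ, y^d) with ỹ ∈ ℝ^{d-1} and y^d ∈ ℝ. Suppose that the open ball of radius R centered at (0,…,0,R) is contained in D, and the open ball of radius R centered at (0,…,0,−R) is disjoint from D. Then for every y ∈ D with 0 ≤ y^d ≤ R/2, one has |y^d − dist(y, D^c)| ≤ |ỹ|²/R, where dist(y, D^c) denotes the Euclidean distance from y to the complement of D. -/
open MeasureTheory Real Filter Topology

/-- Interior/exterior ball condition. Work in `ℝ^d` with `d = n+1 ≥ 1`,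
writing `y = (ỹ, y^d)` where `y^d` is the last coordinate. If the open ball of radius
`R` centered at `(0,…,0,R)` is contained in the open set `D`, and the open ball of
radius `R` centered at `(0,…,0,-R)` is disjoint from `D`, then for every `y ∈ D` with
`0 ≤ y^d ≤ R/2` one has `|y^d − dist(y, D^c)| ≤ |ỹ|²/R`. -/
theorem stmt_11 (n : ℕ) (R : ℝ) (hR : 0 < R)
    (D : Set (EuclideanSpace ℝ (Fin (n + 1)))) (hD : IsOpen D)
    (hin : Metric.ball (EuclideanSpace.single (Fin.last n) R) R ⊆ D)
    (hout : Metric.ball (EuclideanSpace.single (Fin.last n) (-R)) R ∩ D = ∅) :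
    ∀ y ∈ D, 0 ≤ y (Fin.last n) → y (Fin.last n) ≤ R / 2 →
      |y (Fin.last n) - Metric.infDist y Dᶜ| ≤ (∑ j : Fin n, (y j.castSucc) ^ 2) / R := by
  intro y hy ht0 htR
  set t := y (Fin.last n) with htdef
  set s := ∑ j : Fin n, (y j.castSucc) ^ 2 with hsdef
  have hs0 : 0 ≤ s := Finset.sum_nonneg fun j _ => sq_nonneg _
  set c : EuclideanSpace ℝ (Fin (n+1)) := EuclideanSpace.single (Fin.last n) R with hc
  set c' : EuclideanSpace ℝ (Fin (n+1)) := EuclideanSpace.single (Fin.last n) (-R) with hc'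
  -- distances to the two centers
  have hd1 : dist y c = Real.sqrt (s + (t - R)^2) := by
    rw [EuclideanSpace.dist_eq, Fin.sum_univ_castSucc]
    congr 1
    have h1 : ∀ j : Fin n, dist (y j.castSucc) (c j.castSucc) ^ 2 = (y j.castSucc) ^ 2 := by
      intro j
      rw [hc, EuclideanSpace.single_apply, if_neg (Fin.castSucc_lt_last j).ne, Real.dist_eq,
        sub_zero, sq_abs]
    rw [Finset.sum_congr rfl fun j _ => h1 j]
    have h2 : c (Fin.last n) = R := by rw [hc, EuclideanSpace.single_apply, if_pos rfl]
    rw [h2, Real.dist_eq, sq_abs]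
  have hd2 : dist y c' = Real.sqrt (s + (t + R)^2) := by
    rw [EuclideanSpace.dist_eq, Fin.sum_univ_castSucc]
    congr 1
    have h1 : ∀ j : Fin n, dist (y j.castSucc) (c' j.castSucc) ^ 2 = (y j.castSucc) ^ 2 := by
      intro j
      rw [hc', EuclideanSpace.single_apply, if_neg (Fin.castSucc_lt_last j).ne, Real.dist_eq,
        sub_zero, sq_abs]
    rw [Finset.sum_congr rfl fun j _ => h1 j]
    have h2 : c' (Fin.last n) = -R := by rw [hc', EuclideanSpace.single_apply, if_pos rfl]
    rw [h2, Real.dist_eq, sq_abs, sub_neg_eq_add]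
  -- bound dist y c ≤ (R - t) + s / R
  have hd1le : dist y c ≤ (R - t) + s / R := by
    rw [hd1]
    have hnn : 0 ≤ (R - t) + s / R := by
      have : 0 ≤ s / R := div_nonneg hs0 hR.le
      linarith
    have hsq : s + (t - R)^2 ≤ ((R - t) + s / R)^2 := by
      have h : ((R - t) + s / R)^2 - (s + (t - R)^2) = s * (R - 2*t) / R + (s / R)^2 := by
        field_simp; ring
      nlinarith [div_nonneg (mul_nonneg hs0 (by linarith : (0:ℝ) ≤ R - 2*t)) hR.le,
        sq_nonneg (s / R)]
    calc Real.sqrt (s + (t - R)^2) ≤ Real.sqrt (((R - t) + s / R)^2) := Real.sqrt_le_sqrt hsq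
      _ = (R - t) + s / R := Real.sqrt_sq hnn
  -- bound dist y c' ≤ (R + t) + s / R and ≥ R
  have hd2le : dist y c' ≤ (R + t) + s / R := by
    rw [hd2]
    have hnn : 0 ≤ (R + t) + s / R := by
      have : 0 ≤ s / R := div_nonneg hs0 hR.le
      linarith
    have hsq : s + (t + R)^2 ≤ ((R + t) + s / R)^2 := by
      nlinarith [div_nonneg (mul_nonneg hs0 (by linarith : (0:ℝ) ≤ 2*t + R)) hR.le,
        sq_nonneg (s / R), mul_div_cancel₀ s hR.ne']
    calc Real.sqrt (s + (t + R)^2) ≤ Real.sqrt (((R + t) + s / R)^2) := Real.sqrt_le_sqrt hsq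
      _ = (R + t) + s / R := Real.sqrt_sq hnn
  have hd2ge : R ≤ dist y c' := by
    rw [hd2]
    have : R = Real.sqrt (R^2) := (Real.sqrt_sq hR.le).symm
    rw [this]
    apply Real.sqrt_le_sqrt
    nlinarith
  -- D complement nonempty
  have hc'mem : c' ∈ Dᶜ := by
    intro h
    have : c' ∈ Metric.ball c' R ∩ D := ⟨Metric.mem_ball_self hR, h⟩
    rw [hout] at this
    exact this
  -- lower bound on infDist
  have hlow : R - dist y c ≤ Metric.infDist y Dᶜ := by
    by_contra h
    push_neg at h
    obtain ⟨z, hz, hzd⟩ := (Metric.infDist_lt_iff ⟨c', hc'mem⟩).1 h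
    have hz' : z ∉ Metric.ball c R := fun hb => hz (hin hb)
    rw [Metric.mem_ball, not_lt] at hz'
    have := dist_triangle z y c
    have h1 : dist z y = dist y z := dist_comm z y
    linarith
  -- upper bound: the closed ball around c' is in Dᶜ
  have hball : Metric.closedBall c' R ⊆ Dᶜ := by
    have h1 : Metric.ball c' R ⊆ Dᶜ := by
      intro x hx hxD
      have : x ∈ Metric.ball c' R ∩ D := ⟨hx, hxD⟩
      rw [hout] at this
      exact this
    have h2 : Metric.closedBall c' R = closure (Metric.ball c' R) :=
      (closure_ball c' hR.ne').symm
    rw [h2]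
    exact closure_minimal h1 (hD.isClosed_compl)
  have hhigh : Metric.infDist y Dᶜ ≤ dist y c' - R := by
    have hd2pos : 0 < dist y c' := lt_of_lt_of_le hR hd2ge
    set z : EuclideanSpace ℝ (Fin (n+1)) := c' + (R / dist y c') • (y - c') with hz
    have hzball : z ∈ Metric.closedBall c' R := by
      rw [Metric.mem_closedBall, dist_eq_norm, hz]
      have : c' + (R / dist y c') • (y - c') - c' = (R / dist y c') • (y - c') := by abel
      rw [this, norm_smul]
      have hyc : ‖y - c'‖ = dist y c' := (dist_eq_norm y c').symm
      rw [hyc, Real.norm_eq_abs, abs_of_nonneg (div_nonneg hR.le hd2pos.le),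
        div_mul_cancel₀ _ hd2pos.ne']
    have hdyz : dist y z = dist y c' - R := by
      rw [dist_eq_norm, hz]
      have : y - (c' + (R / dist y c') • (y - c')) = (1 - R / dist y c') • (y - c') := by
        rw [sub_smul, one_smul]; abel
      rw [this, norm_smul]
      have hyc : ‖y - c'‖ = dist y c' := (dist_eq_norm y c').symm
      rw [hyc, Real.norm_eq_abs]
      have h1 : R / dist y c' ≤ 1 := (div_le_one hd2pos).2 hd2ge
      rw [abs_of_nonneg (by linarith : (0:ℝ) ≤ 1 - R / dist y c')]
      field_simp
    calc Metric.infDist y Dᶜ ≤ dist y z := Metric.infDist_le_dist_of_mem (hball hzball)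
      _ = dist y c' - R := hdyz
  -- conclude
  rw [abs_sub_le_iff]
  constructor
  · linarith
  · linarith
end

section
/- Let p > 0 be a real number. Then there exist constants 0 < c₁ ≤ c₂, depending only on p, such that for all a, b, T > 0: c₁ · min(1, √(a/T)) · min(1, √(b/T)) · T^{p+1} ≤ ∫_0^T min(1, √(a/t)) · min(1, √(b/t)) · t^p dt ≤ c₂ · min(1, √(a/T)) · min(1, √(b/T)) · T^{p+1}. -/
open MeasureTheory Real Filter Topology

private lemma lint_rpow_aux (q C T : ℝ) (hq : -1 < q) (hC : 0 ≤ C) (hT : 0 < T) :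
    ∫⁻ t in Set.Ioc (0:ℝ) T, ENNReal.ofReal (C * t ^ q)
      = ENNReal.ofReal (C * (T ^ (q + 1) / (q + 1))) := by
  have hint : IntegrableOn (fun t : ℝ => C * t ^ q) (Set.Ioc 0 T) := by
    have := intervalIntegral.intervalIntegrable_rpow' (a := 0) (b := T) hq
    exact ((intervalIntegrable_iff_integrableOn_Ioc_of_le hT.le).mp this).const_mul C
  rw [← ofReal_integral_eq_lintegral_ofReal hint]
  · congr 1
    rw [← intervalIntegral.integral_of_le hT.le, intervalIntegral.integral_const_mul,
      integral_rpow (Or.inl hq), Real.zero_rpow (by linarith)]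
    ring
  · filter_upwards [ae_restrict_mem measurableSet_Ioc] with t ht
    exact mul_nonneg hC (Real.rpow_nonneg ht.1.le q)

private lemma min_scale_aux {x y : ℝ} (_hx : 0 ≤ x) (hy : 1 ≤ y) :
    min 1 (x * y) ≤ y * min 1 x := by
  calc min 1 (x * y) ≤ min y (x * y) := min_le_min hy le_rfl
    _ = y * min 1 x := by
        rw [mul_min_of_nonneg _ _ (le_trans zero_le_one hy), mul_one, mul_comm]

/-- For `p > 0` there are constants `0 < c₁ ≤ c₂` (depending only on `p`)
such that for all `a, b, T > 0`,
`c₁ min(1,√(a/T)) min(1,√(b/T)) T^{p+1} ≤ ∫₀^T min(1,√(a/t)) min(1,√(b/t)) t^p dt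
 ≤ c₂ min(1,√(a/T)) min(1,√(b/T)) T^{p+1}`. -/
theorem stmt_12 (p : ℝ) (hp : 0 < p) :
    ∃ c₁ c₂ : ℝ, 0 < c₁ ∧ c₁ ≤ c₂ ∧
      ∀ a b T : ℝ, 0 < a → 0 < b → 0 < T →
        ENNReal.ofReal
            (c₁ * (min 1 (Real.sqrt (a / T)) * min 1 (Real.sqrt (b / T)) * T ^ (p + 1))) ≤
          ∫⁻ t in Set.Ioc (0 : ℝ) T,
            ENNReal.ofReal (min 1 (Real.sqrt (a / t)) * min 1 (Real.sqrt (b / t)) * t ^ p) ∧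
        ∫⁻ t in Set.Ioc (0 : ℝ) T,
            ENNReal.ofReal (min 1 (Real.sqrt (a / t)) * min 1 (Real.sqrt (b / t)) * t ^ p) ≤
          ENNReal.ofReal
            (c₂ * (min 1 (Real.sqrt (a / T)) * min 1 (Real.sqrt (b / T)) * T ^ (p + 1))) := by
  refine ⟨1 / (p + 1), 1 / p, by positivity, ?_, ?_⟩
  · apply one_div_le_one_div_of_le hp; linarith
  intro a b T ha hb hT
  set ma := min 1 (Real.sqrt (a / T)) with hma
  set mb := min 1 (Real.sqrt (b / T)) with hmb
  have hma0 : 0 ≤ ma := le_min zero_le_one (Real.sqrt_nonneg _)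
  have hmb0 : 0 ≤ mb := le_min zero_le_one (Real.sqrt_nonneg _)
  constructor
  · -- lower bound
    have heq : ENNReal.ofReal (1 / (p + 1) * (ma * mb * T ^ (p + 1)))
        = ∫⁻ t in Set.Ioc (0:ℝ) T, ENNReal.ofReal ((ma * mb) * t ^ p) := by
      rw [lint_rpow_aux p (ma * mb) T (by linarith) (mul_nonneg hma0 hmb0) hT]
      congr 1; ring
    rw [heq]
    apply lintegral_mono_ae
    filter_upwards [ae_restrict_mem measurableSet_Ioc] with t ht
    apply ENNReal.ofReal_le_ofReal
    have h1 : ma ≤ min 1 (Real.sqrt (a / t)) :=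
      min_le_min le_rfl (Real.sqrt_le_sqrt (div_le_div_of_nonneg_left ha.le ht.1 ht.2))
    have h2 : mb ≤ min 1 (Real.sqrt (b / t)) :=
      min_le_min le_rfl (Real.sqrt_le_sqrt (div_le_div_of_nonneg_left hb.le ht.1 ht.2))
    have hmin1 : 0 ≤ min 1 (Real.sqrt (a / t)) := le_min zero_le_one (Real.sqrt_nonneg _)
    have htp : (0:ℝ) ≤ t ^ p := Real.rpow_nonneg ht.1.le p
    have := mul_le_mul (mul_le_mul h1 h2 hmb0 hmin1) le_rfl htp
      (mul_nonneg hmin1 (le_min zero_le_one (Real.sqrt_nonneg _)))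
    exact this
  · -- upper bound
    have hub : ∫⁻ t in Set.Ioc (0:ℝ) T,
        ENNReal.ofReal (min 1 (Real.sqrt (a / t)) * min 1 (Real.sqrt (b / t)) * t ^ p)
        ≤ ∫⁻ t in Set.Ioc (0:ℝ) T, ENNReal.ofReal ((ma * mb * T) * t ^ (p - 1)) := by
      apply lintegral_mono_ae
      filter_upwards [ae_restrict_mem measurableSet_Ioc] with t ht
      apply ENNReal.ofReal_le_ofReal
      have ht0 : 0 < t := ht.1
      set y := Real.sqrt (T / t) with hy
      have hy1 : 1 ≤ y := by
        rw [hy, show (1:ℝ) = Real.sqrt 1 by simp]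
        exact Real.sqrt_le_sqrt ((one_le_div ht0).mpr ht.2)
      have hy0 : 0 ≤ y := Real.sqrt_nonneg _
      have hysq : y * y = T / t := by
        rw [hy]; exact Real.mul_self_sqrt (le_of_lt (div_pos hT ht0))
      have hsplit : ∀ c : ℝ, 0 < c → Real.sqrt (c / t) = Real.sqrt (c / T) * y := by
        intro c hc
        rw [hy, ← Real.sqrt_mul (div_nonneg hc.le hT.le)]
        congr 1
        field_simp
      have h1 : min 1 (Real.sqrt (a / t)) ≤ y * ma := by
        rw [hsplit a ha]; exact min_scale_aux (Real.sqrt_nonneg _) hy1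
      have h2 : min 1 (Real.sqrt (b / t)) ≤ y * mb := by
        rw [hsplit b hb]; exact min_scale_aux (Real.sqrt_nonneg _) hy1
      have htp : (0:ℝ) ≤ t ^ p := Real.rpow_nonneg ht0.le p
      have hmin1 : 0 ≤ min 1 (Real.sqrt (a / t)) := le_min zero_le_one (Real.sqrt_nonneg _)
      have hmin2 : 0 ≤ min 1 (Real.sqrt (b / t)) := le_min zero_le_one (Real.sqrt_nonneg _)
      calc min 1 (Real.sqrt (a / t)) * min 1 (Real.sqrt (b / t)) * t ^ p
          ≤ (y * ma) * (y * mb) * t ^ p := by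
            exact mul_le_mul (mul_le_mul h1 h2 hmin2 (mul_nonneg hy0 hma0)) le_rfl htp
              (mul_nonneg (mul_nonneg hy0 hma0) (mul_nonneg hy0 hmb0))
        _ = (T / t) * (ma * mb) * t ^ p := by rw [← hysq]; ring
        _ = (ma * mb * T) * t ^ (p - 1) := by
            rw [Real.rpow_sub_one ht0.ne' p, div_eq_mul_inv, div_eq_mul_inv]
            ring
    refine hub.trans (le_of_eq ?_)
    rw [lint_rpow_aux (p - 1) (ma * mb * T) T (by linarith)
      (mul_nonneg (mul_nonneg hma0 hmb0) hT.le) hT]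
    congr 1
    have : p - 1 + 1 = p := by ring
    rw [this, Real.rpow_add_one hT.ne' p]
    field_simp
end

section
/- Let 0 < α̲ ≤ ᾱ < 2, let φ satisfy the weak scaling condition (WS), assume in addition that φ is a strictly increasing bijection of (0,∞) onto (0,∞) with inverse φ^{-1}, and let p > ᾱ be a real number. Then there exists a constant c > 0, depending only on p, ᾱ and C̄, such that for every s > 0, ∫_s^∞ [φ^{-1}(t)]^{-p} dt ≤ c · s · [φ^{-1}(s)]^{-p}. -/
/-! Read through `ψ = φ⁻¹`, the upper scaling bound says `t / s ≤ C (ψ t / ψ s) ^ α₁` for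
`s ≤ t`, so `ψ t ^ (-p) ≤ (C s) ^ q ψ s ^ (-p) t ^ (-q)` with `q = p / α₁ > 1`. Integrating
`t ^ (-q)` over `(s, ∞)` gives `s ^ (1 - q) / (q - 1)`, whence the constant `C ^ q / (q - 1)`. -/

open MeasureTheory Real Set

theorem monotoneOn_Ioi_of_rightInverse {φ ψ : ℝ → ℝ} (hφ : MonotoneOn φ (Ioi 0))
    (hψ : ∀ t, 0 < t → 0 < ψ t ∧ φ (ψ t) = t) : MonotoneOn ψ (Ioi 0) := by
  intro s hs t ht hst
  by_contra! hlt
  have hts : t ≤ s := by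
    simpa only [(hψ s hs).2, (hψ t ht).2] using hφ (hψ t ht).1 (hψ s hs).1 hlt.le
  exact hlt.ne (by rw [le_antisymm hst hts])

theorem div_le_mul_rpow_div_of_scaling {φ ψ : ℝ → ℝ} {C α : ℝ}
    (hWS : ∀ r R, 0 < r → r ≤ R → φ R / φ r ≤ C * (R / r) ^ α)
    (hψ : ∀ t, 0 < t → 0 < ψ t ∧ φ (ψ t) = t) (hψmono : MonotoneOn ψ (Ioi 0))
    {s t : ℝ} (hs : 0 < s) (hst : s ≤ t) : t / s ≤ C * (ψ t / ψ s) ^ α := by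
  have ht : 0 < t := hs.trans_le hst
  simpa only [(hψ s hs).2, (hψ t ht).2] using
    hWS (ψ s) (ψ t) (hψ s hs).1 (hψmono hs ht hst)

theorem rpow_neg_le_of_div_le_mul_rpow_div {a b x y α C p : ℝ} (ha : 0 < a) (hb : 0 < b)
    (hx : 0 < x) (hy : 0 < y) (hα : 0 < α) (hC : 0 < C) (hp : 0 ≤ p)
    (h : y / x ≤ C * (b / a) ^ α) :
    b ^ (-p) ≤ (C * x) ^ (p / α) * a ^ (-p) * y ^ (-(p / α)) := by
  have hyx : y / (C * x) ≤ (b / a) ^ α := by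
    rw [div_le_iff₀ (by positivity)]
    rw [div_le_iff₀ hx] at h
    linarith
  calc b ^ (-p) = a ^ (-p) * ((b / a) ^ α) ^ (-(p / α)) := by
        rw [← rpow_mul (by positivity), mul_neg, mul_div_cancel₀ p hα.ne', div_rpow hb.le ha.le,
          rpow_neg ha.le, rpow_neg hb.le]
        field_simp
    _ ≤ a ^ (-p) * (y / (C * x)) ^ (-(p / α)) := by
        have hpα : 0 ≤ p / α := div_nonneg hp hα.le
        exact mul_le_mul_of_nonneg_left
          (rpow_le_rpow_of_nonpos (by positivity) hyx (by linarith)) (by positivity)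
    _ = (C * x) ^ (p / α) * a ^ (-p) * y ^ (-(p / α)) := by
        have hCx : 0 ≤ C * x := by positivity
        rw [div_rpow hy.le hCx, rpow_neg hy.le, rpow_neg hCx, div_inv_eq_mul]
        ring

theorem lintegral_Ioi_ofReal_rpow_neg {q s : ℝ} (hq : 1 < q) (hs : 0 < s) :
    ∫⁻ t in Ioi s, ENNReal.ofReal (t ^ (-q)) = ENNReal.ofReal (s ^ (1 - q) / (q - 1)) := by
  have hq' : -q < -1 := by linarith
  rw [← ofReal_integral_eq_lintegral_ofReal (integrableOn_Ioi_rpow_of_lt hq' hs),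
    integral_Ioi_rpow_of_lt hq' hs]
  · congr 1
    rw [show -q + 1 = 1 - q by ring, neg_div, ← div_neg, neg_sub]
  · filter_upwards [ae_restrict_mem measurableSet_Ioi] with t ht
    exact rpow_nonneg (hs.trans ht).le _

theorem stmt_13_general (α₀ α₁ c C p : ℝ) (φ ψ : ℝ → ℝ)
    (hα₀ : 0 < α₀) (hαα : α₀ ≤ α₁)
    (hC : 1 ≤ C)
    (hp : α₁ < p)
    (hφmono : ∀ r R : ℝ, 0 < r → r ≤ R → φ r ≤ φ R)
    (hWS : ∀ r R : ℝ, 0 < r → r ≤ R →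
      c * (R / r) ^ α₀ ≤ φ R / φ r ∧ φ R / φ r ≤ C * (R / r) ^ α₁)
    (hψ : ∀ t : ℝ, 0 < t → 0 < ψ t ∧ φ (ψ t) = t) :
    ∃ c' : ℝ, 0 < c' ∧ ∀ s : ℝ, 0 < s →
      ∫⁻ t in Set.Ioi s, ENNReal.ofReal ((ψ t) ^ (-p)) ≤
        ENNReal.ofReal (c' * s * (ψ s) ^ (-p)) := by
  have hα₁ : 0 < α₁ := hα₀.trans_le hαα
  have hCpos : 0 < C := one_pos.trans_le hC
  set q := p / α₁
  have hq : 1 < q := (one_lt_div hα₁).2 hp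
  have hψmono := monotoneOn_Ioi_of_rightInverse (fun r hr R _ hrR => hφmono r R hr hrR) hψ
  refine ⟨C ^ q / (q - 1), div_pos (rpow_pos_of_pos hCpos q) (by linarith), fun s hs => ?_⟩
  have hψs := (hψ s hs).1
  have hbound (t : ℝ) (ht : t ∈ Ioi s) : ψ t ^ (-p) ≤ (C * s) ^ q * ψ s ^ (-p) * t ^ (-q) :=
    rpow_neg_le_of_div_le_mul_rpow_div hψs (hψ t (hs.trans ht)).1 hs (hs.trans ht) hα₁
      hCpos (hα₁.trans hp).le
      (div_le_mul_rpow_div_of_scaling (fun r R hr hrR => (hWS r R hr hrR).2) hψ hψmono hs ht.le)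
  calc ∫⁻ t in Ioi s, ENNReal.ofReal (ψ t ^ (-p))
      ≤ ∫⁻ t in Ioi s, ENNReal.ofReal ((C * s) ^ q * ψ s ^ (-p)) * ENNReal.ofReal (t ^ (-q)) :=
        setLIntegral_mono' measurableSet_Ioi fun t ht => by
          rw [← ENNReal.ofReal_mul (by positivity)]
          exact ENNReal.ofReal_le_ofReal (hbound t ht)
    _ = ENNReal.ofReal ((C * s) ^ q * ψ s ^ (-p)) * ENNReal.ofReal (s ^ (1 - q) / (q - 1)) := by
        rw [lintegral_const_mul' _ _ ENNReal.ofReal_ne_top, lintegral_Ioi_ofReal_rpow_neg hq hs]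
    _ = ENNReal.ofReal (C ^ q / (q - 1) * s * ψ s ^ (-p)) := by
        rw [← ENNReal.ofReal_mul (by positivity)]
        congr 1
        have hs_pow : s ^ q * s ^ (1 - q) = s := by rw [← rpow_add hs]; norm_num
        rw [mul_rpow hCpos.le hs.le]
        linear_combination (C ^ q * ψ s ^ (-p) / (q - 1)) * hs_pow

/-- Under (WS), with `φ` a strictly increasing bijection of `(0,∞)` onto
itself with inverse `ψ = φ⁻¹`, for any real `p > α₁` there is `c' > 0` (depending only
on `p, α₁, C`) such that for every `s > 0`,
`∫_s^∞ [φ⁻¹(t)]^{-p} dt ≤ c' s [φ⁻¹(s)]^{-p}`. -/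
theorem stmt_13 (α₀ α₁ c C p : ℝ) (φ ψ : ℝ → ℝ)
    (hα₀ : 0 < α₀) (hαα : α₀ ≤ α₁) (hα₁ : α₁ < 2)
    (hc : 0 < c) (hc1 : c ≤ 1) (hC : 1 ≤ C)
    (hp : α₁ < p)
    (hφpos : ∀ r : ℝ, 0 < r → 0 < φ r)
    (hφmono : ∀ r R : ℝ, 0 < r → r ≤ R → φ r ≤ φ R)
    (hWS : ∀ r R : ℝ, 0 < r → r ≤ R →
      c * (R / r) ^ α₀ ≤ φ R / φ r ∧ φ R / φ r ≤ C * (R / r) ^ α₁)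
    (hφstrict : ∀ r R : ℝ, 0 < r → r < R → φ r < φ R)
    (hφsurj : ∀ t : ℝ, 0 < t → ∃ r : ℝ, 0 < r ∧ φ r = t)
    (hψ : ∀ t : ℝ, 0 < t → 0 < ψ t ∧ φ (ψ t) = t)
    (hψφ : ∀ r : ℝ, 0 < r → ψ (φ r) = r) :
    ∃ c' : ℝ, 0 < c' ∧ ∀ s : ℝ, 0 < s →
      ∫⁻ t in Set.Ioi s, ENNReal.ofReal ((ψ t) ^ (-p)) ≤
        ENNReal.ofReal (c' * s * (ψ s) ^ (-p)) :=
  stmt_13_general α₀ α₁ c C p φ ψ hα₀ hαα hC hp hφmono hWS hψ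
end

section
/- Let 0 < α̲ ≤ ᾱ < 2, let φ satisfy the weak scaling condition (WS), and assume in addition that φ is a strictly increasing bijection of (0,∞) onto (0,∞) with inverse φ^{-1}. Then there exists a constant c > 0, depending only on α̲, ᾱ, c̲, C̄, such that for every s > 0, ∫_ℝ min( 1/φ^{-1}(s) , s/(|h| φ(|h|)) ) dh ≤ c. -/
open MeasureTheory Real Filter Topology

/-- Under (WS), with `φ` a strictly increasing bijection of `(0,∞)` onto
itself with inverse `ψ = φ⁻¹`, there is `c' > 0` (depending only on `α₀, α₁, c, C`)
such that for every `s > 0`, `∫_ℝ min(1/φ⁻¹(s), s/(|h| φ(|h|))) dh ≤ c'`. -/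
theorem stmt_14 (α₀ α₁ c C : ℝ) (φ ψ : ℝ → ℝ)
    (hα₀ : 0 < α₀) (hαα : α₀ ≤ α₁) (hα₁ : α₁ < 2)
    (hc : 0 < c) (hc1 : c ≤ 1) (hC : 1 ≤ C)
    (hφpos : ∀ r : ℝ, 0 < r → 0 < φ r)
    (hφmono : ∀ r R : ℝ, 0 < r → r ≤ R → φ r ≤ φ R)
    (hWS : ∀ r R : ℝ, 0 < r → r ≤ R →
      c * (R / r) ^ α₀ ≤ φ R / φ r ∧ φ R / φ r ≤ C * (R / r) ^ α₁)
    (hφstrict : ∀ r R : ℝ, 0 < r → r < R → φ r < φ R)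
    (hφsurj : ∀ t : ℝ, 0 < t → ∃ r : ℝ, 0 < r ∧ φ r = t)
    (hψ : ∀ t : ℝ, 0 < t → 0 < ψ t ∧ φ (ψ t) = t)
    (hψφ : ∀ r : ℝ, 0 < r → ψ (φ r) = r) :
    ∃ c' : ℝ, 0 < c' ∧ ∀ s : ℝ, 0 < s →
      ∫⁻ h : ℝ, ENNReal.ofReal (min (1 / ψ s) (s / (|h| * φ |h|))) ≤
        ENNReal.ofReal c' := by
  refine ⟨2 + 2 / (c * α₀), by positivity, fun s hs => ?_⟩
  obtain ⟨hρ, hφρ⟩ := hψ s hs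
  set ρ := ψ s with hρ_def
  set p := -(1 + α₀) with hp_def
  have hp : p < -1 := by rw [hp_def]; linarith
  set K := ρ ^ α₀ / c with hK_def
  have hK : 0 < K := by positivity
  -- the analytic bound for t > ρ
  have key : ∀ t : ℝ, ρ < t → s / (t * φ t) ≤ K * t ^ p := by
    intro t ht
    have ht0 : 0 < t := hρ.trans ht
    have hWS' := (hWS ρ t hρ ht.le).1
    rw [hφρ] at hWS'
    have hφt : 0 < φ t := hφpos t ht0
    have hlow : s * (c * ((t / ρ) ^ α₀)) ≤ φ t := by
      have := (le_div_iff₀ hs).1 hWS'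
      linarith
    have hB : 0 < t * (s * (c * ((t / ρ) ^ α₀))) := by positivity
    have h2 : s / (t * φ t) ≤ s / (t * (s * (c * ((t / ρ) ^ α₀)))) := by
      apply div_le_div_of_nonneg_left hs.le hB
      have := mul_le_mul_of_nonneg_left hlow ht0.le
      linarith
    refine h2.trans_eq ?_
    have h3 : (0:ℝ) < t ^ α₀ := Real.rpow_pos_of_pos ht0 _
    have h4 : (0:ℝ) < ρ ^ α₀ := Real.rpow_pos_of_pos hρ _
    rw [Real.div_rpow ht0.le hρ.le, hp_def, Real.rpow_neg ht0.le, Real.rpow_add ht0,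
      Real.rpow_one, hK_def]
    field_simp
  -- the three dominating functions
  set f1 : ℝ → ENNReal := (Set.Icc (-ρ) ρ).indicator (fun _ => ENNReal.ofReal (1 / ρ)) with hf1
  set f2 : ℝ → ENNReal := (Set.Ioi ρ).indicator (fun x => ENNReal.ofReal (K * x ^ p)) with hf2
  set f3 : ℝ → ENNReal :=
    (Set.Iio (-ρ)).indicator (fun x => ENNReal.ofReal (K * (-x) ^ p)) with hf3
  have m2 : Measurable f2 := by
    apply Measurable.indicator _ measurableSet_Ioi
    fun_prop
  have m3 : Measurable f3 := by
    apply Measurable.indicator _ measurableSet_Iio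
    fun_prop
  have hmono : ∀ h : ℝ, ENNReal.ofReal (min (1 / ρ) (s / (|h| * φ |h|))) ≤
      f1 h + f2 h + f3 h := by
    intro h
    rcases le_or_gt (|h|) ρ with hle | hgt
    · have h1 : f1 h = ENNReal.ofReal (1 / ρ) := by
        rw [hf1, Set.indicator_of_mem]
        rw [Set.mem_Icc]
        constructor
        · linarith [neg_abs_le h]
        · linarith [le_abs_self h]
      calc ENNReal.ofReal (min (1 / ρ) (s / (|h| * φ |h|)))
          ≤ ENNReal.ofReal (1 / ρ) := ENNReal.ofReal_le_ofReal (min_le_left _ _)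
        _ = f1 h := h1.symm
        _ ≤ f1 h + f2 h := le_self_add
        _ ≤ f1 h + f2 h + f3 h := le_self_add
    · have hb : ENNReal.ofReal (min (1 / ρ) (s / (|h| * φ |h|))) ≤
          ENNReal.ofReal (K * |h| ^ p) :=
        ENNReal.ofReal_le_ofReal ((min_le_right _ _).trans (key _ hgt))
      rcases lt_abs.1 hgt with hcase | hcase
      · have h2 : f2 h = ENNReal.ofReal (K * h ^ p) := by
          rw [hf2, Set.indicator_of_mem (Set.mem_Ioi.2 hcase)]
        have habs : |h| = h := abs_of_pos (hρ.trans hcase)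
        calc ENNReal.ofReal (min (1 / ρ) (s / (|h| * φ |h|)))
            ≤ ENNReal.ofReal (K * |h| ^ p) := hb
          _ = f2 h := by rw [h2, habs]
          _ ≤ f1 h + f2 h := le_add_self
          _ ≤ f1 h + f2 h + f3 h := le_self_add
      · have hneg : h < -ρ := by linarith
        have h3 : f3 h = ENNReal.ofReal (K * (-h) ^ p) := by
          rw [hf3, Set.indicator_of_mem (Set.mem_Iio.2 hneg)]
        have habs : |h| = -h := abs_of_neg (by linarith [hρ] : h < 0)
        calc ENNReal.ofReal (min (1 / ρ) (s / (|h| * φ |h|)))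
            ≤ ENNReal.ofReal (K * |h| ^ p) := hb
          _ = f3 h := by rw [h3, habs]
          _ ≤ f1 h + f2 h + f3 h := le_add_self
  -- integrability and value of the tail integral
  have hInt : IntegrableOn (fun x : ℝ => K * x ^ p) (Set.Ioi ρ) :=
    (integrableOn_Ioi_rpow_of_lt hp hρ).const_mul K
  have hnn : 0 ≤ᵐ[volume.restrict (Set.Ioi ρ)] fun x : ℝ => K * x ^ p := by
    filter_upwards [ae_restrict_mem measurableSet_Ioi] with x hx
    have : (0:ℝ) < x := hρ.trans hx
    positivity
  have hval : ∫ x in Set.Ioi ρ, K * x ^ p = 1 / (c * α₀) := by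
    rw [MeasureTheory.integral_const_mul, integral_Ioi_rpow_of_lt hp hρ]
    have hpe : p + 1 = -α₀ := by rw [hp_def]; ring
    rw [hpe, Real.rpow_neg hρ.le, hK_def]
    have h4 : (0:ℝ) < ρ ^ α₀ := Real.rpow_pos_of_pos hρ _
    field_simp
  have htail : ∫⁻ x in Set.Ioi ρ, ENNReal.ofReal (K * x ^ p) =
      ENNReal.ofReal (1 / (c * α₀)) := by
    rw [← ofReal_integral_eq_lintegral_ofReal hInt hnn, hval]
  have E1 : ∫⁻ h, f1 h = ENNReal.ofReal 2 := by
    rw [hf1, lintegral_indicator measurableSet_Icc, setLIntegral_const, Real.volume_Icc,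
      ← ENNReal.ofReal_mul (by positivity)]
    congr 1
    field_simp
    ring
  have E2 : ∫⁻ h, f2 h = ENNReal.ofReal (1 / (c * α₀)) := by
    rw [hf2, lintegral_indicator measurableSet_Ioi, htail]
  have E3 : ∫⁻ h, f3 h = ENNReal.ofReal (1 / (c * α₀)) := by
    rw [hf3, lintegral_indicator measurableSet_Iio]
    have himg : Neg.neg ⁻¹' (Set.Ioi ρ) = Set.Iio (-ρ) := by
      ext x; simp [lt_neg]
    have hsub : ∫⁻ x in Neg.neg ⁻¹' (Set.Ioi ρ), ENNReal.ofReal (K * (-x) ^ p) =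
        ∫⁻ y in Set.Ioi ρ, ENNReal.ofReal (K * y ^ p) :=
      (Measure.measurePreserving_neg (volume : Measure ℝ)).setLIntegral_comp_preimage_emb
        (MeasurableEquiv.neg ℝ).measurableEmbedding (fun y => ENNReal.ofReal (K * y ^ p))
        (Set.Ioi ρ)
    rw [← himg, hsub, htail]
  calc ∫⁻ h : ℝ, ENNReal.ofReal (min (1 / ρ) (s / (|h| * φ |h|)))
      ≤ ∫⁻ h : ℝ, (f1 h + f2 h + f3 h) := lintegral_mono hmono
    _ = (∫⁻ h, f1 h) + (∫⁻ h, f2 h) + (∫⁻ h, f3 h) := by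
        rw [lintegral_add_right _ m3, lintegral_add_right _ m2]
    _ = ENNReal.ofReal 2 + ENNReal.ofReal (1 / (c * α₀)) + ENNReal.ofReal (1 / (c * α₀)) := by
        rw [E1, E2, E3]
    _ ≤ ENNReal.ofReal (2 + 2 / (c * α₀)) := by
        rw [← ENNReal.ofReal_add (by norm_num) (by positivity),
          ← ENNReal.ofReal_add (by positivity) (by positivity)]
        exact ENNReal.ofReal_le_ofReal (le_of_eq (by ring))
end
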